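/- arXiv:2412.12835 — 6 statements merged into one kernel-verified Lean document; each statement's English description precedes it below -/
import Mathlib

section
/- For integers n ≥ 3 and any real r, the Laplace–Pólya values satisfy the recursion J_n(r) = ((n+r)/(2(n-1))) · J_{n-1}(r+1) + ((n-r)/(2(n-1))) · J_{n-1}(r-1), where J_n(r) is defined by the explicit finite sum formula. -/
/-- The Laplace–Pólya values, via Laplace's explicit finite-sum formula. -/
noncomputable def J (n : ℕ) (r : ℝ) : ℝ :=
  (1 / (2 ^ (n - 1) * (Nat.factorial (n - 1)))) *
    ∑ i ∈ Finset.Icc (0 : ℤ) ⌊((n : ℝ) + r) / 2⌋,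
      (-1 : ℝ) ^ i * (n.choose i.toNat) * ((n : ℝ) + r - 2 * (i : ℝ)) ^ (n - 1)


open Finset

lemma choose_rel (m k : ℕ) :
    ((k:ℝ)+1) * ((m+2).choose (k+1)) = ((m:ℝ)+2-k) * ((m+2).choose k) := by
  rcases le_or_gt k (m+2) with h | h
  · have h1 := Nat.choose_succ_right_eq (m+2) k
    have h2 : ((m+2) - k : ℕ) = ((m:ℝ)+2-k) := by push_cast [Nat.cast_sub h]; ring
    have := congrArg (Nat.cast : ℕ → ℝ) h1
    push_cast at this
    rw [Nat.cast_sub h] at this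
    push_cast at this
    linarith
  · rw [Nat.choose_eq_zero_of_lt h, Nat.choose_eq_zero_of_lt (by omega)]
    simp

lemma key (m : ℕ) (x y : ℝ) (hxy : x + y = 2*m+6) (M : ℤ) :
    ∑ i ∈ Icc (0:ℤ) M, (-1:ℝ)^i * ((m+3).choose i.toNat) * (x - 2*i)^(m+2)
    = x * ∑ i ∈ Icc (0:ℤ) M, (-1:ℝ)^i * ((m+2).choose i.toNat) * (x - 2*i)^(m+1)
    + y * ∑ i ∈ Icc (0:ℤ) (M-1), (-1:ℝ)^i * ((m+2).choose i.toNat) * ((x - 2) - 2*i)^(m+1) := by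
  have hshift : ∑ i ∈ Icc (0:ℤ) (M-1), (-1:ℝ)^i * ((m+2).choose i.toNat) * ((x-2) - 2*i)^(m+1)
      = ∑ j ∈ Icc (1:ℤ) M, (-1:ℝ)^(j-1) * ((m+2).choose (j-1).toNat) * (x - 2*j)^(m+1) := by
    rw [show Icc (1:ℤ) M = (Icc (0:ℤ) (M-1)).map (addRightEmbedding 1) by
      rw [Finset.map_add_right_Icc]; norm_num, Finset.sum_map]
    apply Finset.sum_congr rfl
    intro i hi
    simp only [addRightEmbedding_apply, add_sub_cancel_right]
    push_cast
    ring_nf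
  rw [hshift]
  rcases lt_or_ge M 0 with hM | hM
  · rw [Finset.Icc_eq_empty (by omega : ¬ (0:ℤ) ≤ M),
      Finset.Icc_eq_empty (by omega : ¬ (1:ℤ) ≤ M)]
    simp
  · have hins : Icc (0:ℤ) M = insert 0 (Icc 1 M) := by
      ext i; simp only [Finset.mem_Icc, Finset.mem_insert]; omega
    rw [hins, Finset.sum_insert (by simp), Finset.sum_insert (by simp),
      mul_add, Finset.mul_sum, Finset.mul_sum, add_assoc, ← Finset.sum_add_distrib]
    simp only [zpow_zero, Int.toNat_zero, Nat.choose_zero_right, Nat.cast_one, Int.cast_zero,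
      mul_zero, sub_zero, one_mul]
    rw [show x * x^(m+1) = x^(m+2) by ring]
    congr 1
    apply Finset.sum_congr rfl
    intro j hj
    simp only [Finset.mem_Icc] at hj
    obtain ⟨k, hk⟩ : ∃ k : ℕ, j = (k:ℤ)+1 := ⟨(j-1).toNat, by omega⟩
    subst hk
    have ht1 : ((k:ℤ)+1).toNat = k+1 := by omega
    have ht2 : ((k:ℤ)+1-1).toNat = k := by omega
    have hz : (-1:ℝ)^((k:ℤ)+1) = (-1:ℝ)^k * (-1) := by
      rw [zpow_add_one₀ (by norm_num), zpow_natCast]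
    have hz2 : (-1:ℝ)^((k:ℤ)+1-1) = (-1:ℝ)^k := by
      norm_num [zpow_natCast]
    rw [ht1, ht2, hz, hz2, Nat.choose_succ_succ (m+2) k]
    have hrel := choose_rel m k
    have hcast : (((k:ℤ)+1 : ℤ) : ℝ) = (k:ℝ)+1 := by push_cast; ring
    rw [hcast, pow_succ]
    push_cast
    linear_combination (2 * (-1:ℝ)^k * (x - 2*((k:ℝ)+1))^(m+1)) * hrel
      + (-(-1:ℝ)^k * ((m+2).choose k : ℝ) * (x - 2*((k:ℝ)+1))^(m+1)) * hxy

theorem J_recursion (n : ℕ) (hn : 3 ≤ n) (r : ℝ) :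
    J n r = (((n : ℝ) + r) / (2 * ((n : ℝ) - 1))) * J (n - 1) (r + 1) +
      (((n : ℝ) - r) / (2 * ((n : ℝ) - 1))) * J (n - 1) (r - 1) := by
  obtain ⟨m, rfl⟩ : ∃ m, n = m + 3 := ⟨n - 3, by omega⟩
  unfold J
  simp only [show m + 3 - 1 = m + 2 from rfl, show m + 2 - 1 = m + 1 from rfl]
  set x : ℝ := (m:ℝ) + 3 + r with hx
  set y : ℝ := (m:ℝ) + 3 - r with hy
  have e1 : ((m + 3 : ℕ) : ℝ) + r = x := by push_cast [hx]; ring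
  have e2 : ((m + 2 : ℕ) : ℝ) + (r + 1) = x := by push_cast [hx]; ring
  have e3 : ((m + 2 : ℕ) : ℝ) + (r - 1) = x - 2 := by push_cast [hx]; ring
  rw [e1, e2, e3]
  have e4 : ⌊(x - 2) / 2⌋ = ⌊x / 2⌋ - 1 := by
    rw [show (x-2)/2 = x/2 - 1 by ring, Int.floor_sub_one]
  rw [e4]
  set M : ℤ := ⌊x / 2⌋
  rw [key m x y (by push_cast [hx, hy]; ring) M]
  have hfac : ((m+2).factorial : ℝ) = ((m:ℝ)+2) * ((m+1).factorial : ℝ) := by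
    rw [show m + 2 = (m+1)+1 from rfl, Nat.factorial_succ]; push_cast; ring
  have hf1 : ((m+1).factorial : ℝ) ≠ 0 := by positivity
  have hm2 : ((m:ℝ)+2) ≠ 0 := by positivity
  have hcn : (((m+3:ℕ) : ℝ) - 1) = (m:ℝ) + 2 := by push_cast; ring
  have hcr : (((m+3:ℕ) : ℝ) + r) = x := e1
  have hcl : (((m+3:ℕ) : ℝ) - r) = y := by push_cast [hy]; ring
  rw [hcn, hcl, hfac]
  set A : ℝ := ∑ i ∈ Icc (0:ℤ) M, (-1:ℝ)^i * ((m+2).choose i.toNat) * (x - 2*i) ^ (m+1) with hA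
  set B : ℝ := ∑ i ∈ Icc (0:ℤ) (M-1), (-1:ℝ)^i * ((m+2).choose i.toNat) * (x - 2 - 2*i) ^ (m+1) with hB
  clear_value A B
  clear hA hB e1 e2 e3 e4 hcn hcl hcr
  clear_value x y M
  clear hx hy
  field_simp
  ring_nf
end

section
/- For every integer n ≥ 2, J_n(0) = (n/(n-1)) · J_{n-1}(1) provided n ≥ 3, i.e., the central value recursion holds. -/
open Finset Polynomial

theorem neg_one_pow_mul_neg_one_pow_sub {R : Type*} [Monoid R] [HasDistribNeg R] {k n : ℕ}
    (hk : k ≤ n) : (-1 : R) ^ n * (-1) ^ (n - k) = (-1) ^ k := by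
  obtain ⟨j, rfl⟩ := Nat.exists_eq_add_of_le hk
  rw [Nat.add_sub_cancel_left, pow_add, mul_assoc, ← pow_add, ← two_mul, pow_mul, neg_one_sq,
    one_pow, mul_one]

theorem Polynomial.sum_range_neg_one_pow_mul_choose_mul_eval_eq_zero {R : Type*} [CommRing R]
    (P : R[X]) {n : ℕ} (hP : P.natDegree < n) :
    ∑ k ∈ range (n + 1), (-1) ^ k * n.choose k * P.eval (k : R) = 0 := by
  have h := congrFun (P.fwdDiff_iter_eq_zero_of_degree_lt hP) 0
  rw [fwdDiff_iter_eq_sum_shift, Pi.zero_apply] at h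
  calc ∑ k ∈ range (n + 1), (-1) ^ k * n.choose k * P.eval (k : R)
      = (-1) ^ n * ∑ k ∈ range (n + 1),
          ((-1 : ℤ) ^ (n - k) * n.choose k) • P.eval (0 + k • (1 : R)) := by
        rw [mul_sum]
        refine sum_congr rfl fun k hk => ?_
        rw [← neg_one_pow_mul_neg_one_pow_sub (Nat.lt_succ_iff.mp (mem_range.mp hk))]
        simp only [zsmul_eq_mul, nsmul_eq_mul, mul_one, zero_add]
        push_cast
        ring
    _ = 0 := by rw [h, mul_zero]

theorem Finset.sum_range_succ_eq_two_nsmul_sum_range_div_two_succ {M : Type*} [AddCommMonoid M]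
    {f : ℕ → M} {n : ℕ} (hsymm : ∀ i ≤ n, f (n - i) = f i) (hmid : Even n → f (n / 2) = 0) :
    ∑ i ∈ range (n + 1), f i = 2 • ∑ i ∈ range (n / 2 + 1), f i := by
  rw [← sum_range_add_sum_Ico f (by omega : n / 2 + 1 ≤ n + 1), two_nsmul]
  congr 1
  have hreflect : ∑ j ∈ Ico (n / 2 + 1) (n + 1), f j = ∑ j ∈ range (n - n / 2), f j := by
    have := sum_Ico_reflect f 0 (by omega : n - n / 2 ≤ n + 1)
    rw [show n + 1 - (n - n / 2) = n / 2 + 1 by omega, Nat.sub_zero, ← range_eq_Ico] at this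
    rw [← this]
    exact sum_congr rfl fun j hj => hsymm j (by have := mem_range.mp hj; omega)
  rw [hreflect]
  rcases Nat.even_or_odd n with heven | hodd
  · rw [show n - n / 2 = n / 2 by have := heven.two_dvd; omega, sum_range_succ, hmid heven,
      add_zero]
  · rw [show n - n / 2 = n / 2 + 1 by have := hodd.not_two_dvd_nat; omega]

theorem sum_range_div_two_succ_neg_one_pow_mul_choose_mul_pow_eq_zero {R : Type*} [CommRing R]
    [IsAddTorsionFree R] {n j : ℕ} (hj : j ≠ 0) (hjn : j < n) (hparity : Even (n + j)) :
    ∑ i ∈ range (n / 2 + 1), (-1) ^ i * n.choose i * ((n : R) - 2 * i) ^ j = 0 := by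
  set f : ℕ → R := fun i => (-1) ^ i * n.choose i * ((n : R) - 2 * i) ^ j
  have hfull : ∑ i ∈ range (n + 1), f i = 0 := by
    have hdeg : (C (n : R) - 2 * X).natDegree ≤ 1 := by compute_degree
    have h := ((C (n : R) - 2 * X) ^ j).sum_range_neg_one_pow_mul_choose_mul_eval_eq_zero
      ((natDegree_pow_le_of_le j hdeg).trans_lt (by rwa [mul_one]))
    simpa [f] using h
  have hsymm : ∀ i ≤ n, f (n - i) = f i := by
    intro i hi
    have hsign : (-1 : R) ^ (n - i) * (-1) ^ j = (-1) ^ i := by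
      rw [← pow_add]
      refine neg_one_pow_congr ?_
      obtain ⟨m, rfl⟩ := Nat.exists_eq_add_of_le hi
      simp only [Nat.add_sub_cancel_left]
      simp only [Nat.even_add] at hparity ⊢
      tauto
    simp only [f, Nat.choose_symm hi, Nat.cast_sub hi]
    rw [show (n : R) - 2 * (n - i) = -1 * (n - 2 * i) by ring, mul_pow, ← hsign]
    ring
  have hmid : Even n → f (n / 2) = 0 := by
    intro heven
    have hcentre : (n : R) - 2 * (n / 2 : ℕ) = 0 := by
      rw [sub_eq_zero, ← Nat.cast_ofNat, ← Nat.cast_mul, Nat.mul_div_cancel' heven.two_dvd]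
    simp only [f, hcentre, zero_pow hj, mul_zero]
  rw [sum_range_succ_eq_two_nsmul_sum_range_div_two_succ hsymm hmid] at hfull
  exact IsAddTorsionFree.nsmul_right_injective two_ne_zero (hfull.trans (smul_zero 2).symm)

theorem Nat.cast_choose_mul_sub_two_mul {R : Type*} [CommRing R] (n i : ℕ) :
    (n.choose i : R) * (n - 2 * i) = n * (2 * (n - 1).choose i - n.choose i) := by
  rcases n with _ | n
  · cases i <;> simp
  have hpascal : (n.choose i : R) * (n + 1) = (n + 1).choose i * (n + 1 - i) := by
    by_cases hi : i ≤ n + 1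
    · have h := congrArg (Nat.cast : ℕ → R) (Nat.choose_mul_succ_eq n i)
      push_cast [Nat.cast_sub hi] at h
      exact h
    · simp [Nat.choose_eq_zero_of_lt (by omega : n < i),
        Nat.choose_eq_zero_of_lt (by omega : n + 1 < i)]
  simp only [Nat.add_sub_cancel]
  push_cast
  linear_combination -2 * hpascal

theorem sum_range_div_two_succ_neg_one_pow_mul_choose_mul_pow_succ {R : Type*} [CommRing R]
    [IsAddTorsionFree R] {n j : ℕ} (hj : j ≠ 0) (hjn : j < n) (hparity : Even (n + j)) :
    ∑ i ∈ range (n / 2 + 1), (-1) ^ i * n.choose i * ((n : R) - 2 * i) ^ (j + 1) =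
      2 * n * ∑ i ∈ range (n / 2 + 1), (-1) ^ i * (n - 1).choose i * ((n : R) - 2 * i) ^ j := by
  calc ∑ i ∈ range (n / 2 + 1), (-1) ^ i * n.choose i * ((n : R) - 2 * i) ^ (j + 1)
      = ∑ i ∈ range (n / 2 + 1), (2 * n * ((-1) ^ i * (n - 1).choose i * ((n : R) - 2 * i) ^ j)
          - n * ((-1) ^ i * n.choose i * ((n : R) - 2 * i) ^ j)) :=
        sum_congr rfl fun i _ => by
          linear_combination
            (-1) ^ i * ((n : R) - 2 * i) ^ j * Nat.cast_choose_mul_sub_two_mul (R := R) n i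
    _ = _ := by
        rw [sum_sub_distrib, ← mul_sum, ← mul_sum,
          sum_range_div_two_succ_neg_one_pow_mul_choose_mul_pow_eq_zero hj hjn hparity, mul_zero,
          sub_zero]

theorem Int.floor_natCast_div_two {K : Type*} [Field K] [LinearOrder K] [IsStrictOrderedRing K]
    [FloorRing K] (m : ℕ) : ⌊(m : K) / 2⌋ = (m / 2 : ℕ) := by
  rw [← Nat.cast_ofNat, Int.floor_div_natCast, Int.floor_natCast]
  omega

theorem Finset.sum_Icc_zero_natCast_eq_sum_range {M : Type*} [AddCommMonoid M] (f : ℤ → M)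
    (m : ℕ) :
    ∑ i ∈ Icc (0 : ℤ) m, f i = ∑ k ∈ range (m + 1), f k := by
  rw [Int.Icc_eq_finset_map, sum_map]
  simp

theorem J_natCast (n r : ℕ) :
    J n r = 1 / (2 ^ (n - 1) * (n - 1).factorial) *
      ∑ i ∈ range ((n + r) / 2 + 1),
        (-1) ^ i * n.choose i * (((n + r : ℕ) : ℝ) - 2 * i) ^ (n - 1) := by
  rw [J, ← Nat.cast_add, Int.floor_natCast_div_two, sum_Icc_zero_natCast_eq_sum_range]
  simp only [zpow_natCast, Int.toNat_natCast, Int.cast_natCast]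

theorem J_central_recursion (n : ℕ) (hn : 3 ≤ n) :
    J n 0 = ((n : ℝ) / ((n : ℝ) - 1)) * J (n - 1) 1 := by
  obtain ⟨m, rfl⟩ : ∃ m, n = m + 2 := ⟨n - 2, by omega⟩
  have hJ0 := J_natCast (m + 2) 0
  have hJ1 := J_natCast (m + 1) 1
  rw [Nat.cast_zero] at hJ0
  rw [Nat.cast_one] at hJ1
  have hsum := sum_range_div_two_succ_neg_one_pow_mul_choose_mul_pow_succ (R := ℝ)
    (n := m + 2) (j := m) (by omega) (by omega) (by simp [Nat.even_add])
  simp only [show m + 2 - 1 = m + 1 by omega, show m + 1 + 1 = m + 2 by omega,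
    Nat.add_sub_cancel] at hJ0 hJ1 hsum ⊢
  rw [hJ0, hJ1, hsum, Nat.factorial_succ, pow_succ, Nat.cast_mul,
    show ((m + 2 : ℕ) : ℝ) - 1 = (m + 1 : ℕ) by push_cast; ring]
  field_simp
end

section
/- For positive integers m and 1 ≤ l ≤ m, the Eulerian number A(m,l) satisfies A(m,l) = m! · J_{m+1}(2l - m - 1). -/
/-- Eulerian numbers via the classical explicit alternating sum. -/
noncomputable def eulerianSum (m l : ℕ) : ℝ :=
  ∑ i ∈ Finset.range (l + 1),
    (-1 : ℝ) ^ i * ((m + 1).choose i) * ((l : ℝ) - (i : ℝ)) ^ m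

theorem eulerian_eq_factorial_mul_J (m l : ℕ) (hm : 1 ≤ m) (hl : 1 ≤ l) (hlm : l ≤ m) :
    eulerianSum m l = (Nat.factorial m : ℝ) * J (m + 1) (2 * (l : ℝ) - (m : ℝ) - 1) := by
  unfold J eulerianSum
  have hfloor : ⌊(((m + 1 : ℕ) : ℝ) + (2 * (l : ℝ) - (m : ℝ) - 1)) / 2⌋ = (l : ℤ) := by
    have : (((m + 1 : ℕ) : ℝ) + (2 * (l : ℝ) - (m : ℝ) - 1)) / 2 = (l : ℝ) := by
      push_cast; ring
    rw [this, Int.floor_natCast]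
  rw [hfloor]
  simp only [Nat.add_sub_cancel]
  have hsum : ∑ i ∈ Finset.Icc (0 : ℤ) (l : ℤ),
      (-1 : ℝ) ^ i * ((m + 1).choose i.toNat) *
        (((m + 1 : ℕ) : ℝ) + (2 * (l : ℝ) - (m : ℝ) - 1) - 2 * (i : ℝ)) ^ m
      = ∑ i ∈ Finset.range (l + 1),
        (2 : ℝ) ^ m * ((-1 : ℝ) ^ i * ((m + 1).choose i) * ((l : ℝ) - (i : ℝ)) ^ m) := by
    refine Finset.sum_nbij' (fun i => i.toNat) (fun i => (i : ℤ)) ?_ ?_ ?_ ?_ ?_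
    · intro a ha
      simp only [Finset.mem_Icc] at ha
      simp only [Finset.mem_range]
      omega
    · intro a ha
      simp only [Finset.mem_range] at ha
      simp only [Finset.mem_Icc]
      omega
    · intro a ha
      simp only [Finset.mem_Icc] at ha
      exact Int.toNat_of_nonneg ha.1
    · intro a ha
      simp [Int.toNat_natCast]
    · intro a ha
      simp only [Finset.mem_Icc] at ha
      obtain ⟨b, rfl⟩ : ∃ b : ℕ, a = (b : ℤ) := ⟨a.toNat, by omega⟩
      simp only [Int.toNat_natCast]
      rw [zpow_natCast]
      have h2 : (((m + 1 : ℕ) : ℝ) + (2 * (l : ℝ) - (m : ℝ) - 1) - 2 * (((b : ℤ) : ℤ) : ℝ))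
          = 2 * ((l : ℝ) - (b : ℝ)) := by push_cast; ring
      rw [h2, mul_pow]
      ring
  rw [hsum, ← Finset.mul_sum]
  have h2 : ((2 : ℝ) ^ m) ≠ 0 := by positivity
  have hf : ((Nat.factorial m : ℝ)) ≠ 0 := by positivity
  field_simp
end

section
/- For integers n ≥ 4 and −1 ≤ r ≤ n−2, the two-step ratio satisfies J_n(r+2)/J_n(r) ≤ d_{n,r}, where d_{n,r} = ((n−r)/(n+r+2)) · ((n−r−2)(n−r+2))/((n+r)(n+r+4)). -/
/-- Integer-valued core sum. -/
noncomputable def Sz (n : ℕ) (m : ℤ) : ℤ :=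
  ∑ i ∈ Finset.Icc (0 : ℤ) (m / 2),
    (-1) ^ i.toNat * (n.choose i.toNat) * (m - 2 * i) ^ (n - 1)

/-- Range version. -/
def SzR (n K : ℕ) (m : ℤ) : ℤ :=
  ∑ j ∈ Finset.range K, (-1 : ℤ) ^ j * (n.choose j) * (m - 2 * (j : ℤ)) ^ (n - 1)

lemma Sz_neg (n : ℕ) (m : ℤ) (hm : m < 0) : Sz n m = 0 := by
  have : m / 2 < 0 := Int.ediv_neg_of_neg_of_pos hm (by norm_num)
  rw [Sz, Finset.Icc_eq_empty (by omega), Finset.sum_empty]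

lemma Sz_eq_SzR (n : ℕ) (m : ℤ) (hm : 0 ≤ m) : Sz n m = SzR n ((m / 2).toNat + 1) m := by
  rw [Sz, SzR]
  have h2 : (0:ℤ) ≤ m / 2 := Int.ediv_nonneg hm (by norm_num)
  refine Finset.sum_nbij' (fun i => i.toNat) (fun j => (j : ℤ)) ?_ ?_ ?_ ?_ ?_
  · intro a ha
    simp only [Finset.mem_Icc] at ha
    simp only [Finset.mem_range]
    omega
  · intro a ha
    simp only [Finset.mem_range] at ha
    simp only [Finset.mem_Icc]
    omega
  · intro a ha; simp only [Finset.mem_Icc] at ha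
    exact Int.toNat_of_nonneg ha.1
  · intro a _; simp
  · intro a ha
    simp only [Finset.mem_Icc] at ha
    rw [Int.toNat_of_nonneg ha.1]

lemma choose_id (e K : ℕ) :
    ((K : ℤ) + 1) * ((e+1).choose (K+1)) = ((e : ℤ) + 1 - K) * ((e+1).choose K) := by
  rcases le_or_gt K (e+1) with hK | hK
  · have h := Nat.choose_succ_right_eq (e+1) K
    zify [hK] at h
    linarith [h]
  · rw [Nat.choose_eq_zero_of_lt hK, Nat.choose_eq_zero_of_lt (by omega)]
    simp

lemma rec_core (e K : ℕ) (m : ℤ) :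
    SzR (e+2) (K+1) m = m * SzR (e+1) (K+1) m + (2*(e:ℤ) + 4 - m) * SzR (e+1) K (m-2) := by
  induction K with
  | zero => simp [SzR]; ring
  | succ K ih =>
    have hA := Finset.sum_range_succ
      (fun j => (-1 : ℤ) ^ j * ((e+2).choose j) * (m - 2 * (j : ℤ)) ^ (e+1)) (K+1)
    have hB1 := Finset.sum_range_succ
      (fun j => (-1 : ℤ) ^ j * ((e+1).choose j) * (m - 2 * (j : ℤ)) ^ e) (K+1)
    have hB2 := Finset.sum_range_succ
      (fun j => (-1 : ℤ) ^ j * ((e+1).choose j) * ((m-2) - 2 * (j : ℤ)) ^ e) K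
    simp only [SzR, show e+2-1 = e+1 from rfl, show e+1-1 = e from rfl] at ih ⊢
    rw [hA, hB1, hB2]
    have c2 : (((e+2).choose (K+1) : ℤ)) = ((e+1).choose K : ℤ) + ((e+1).choose (K+1) : ℤ) := by
      exact_mod_cast congrArg (Nat.cast : ℕ → ℤ) (Nat.choose_succ_succ (e+1) K)
    have cid := choose_id e K
    have hinc : (-1 : ℤ) ^ (K+1) * ((e+2).choose (K+1)) * (m - 2 * ((K:ℤ)+1)) ^ (e+1)
        = m * ((-1 : ℤ) ^ (K+1) * ((e+1).choose (K+1)) * (m - 2 * ((K:ℤ)+1)) ^ e)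
          + (2*(e:ℤ) + 4 - m) * ((-1 : ℤ) ^ K * ((e+1).choose K) * ((m-2) - 2 * (K:ℤ)) ^ e) := by
      have hX : (m-2) - 2*(K:ℤ) = m - 2*((K:ℤ)+1) := by ring
      rw [hX, c2]
      linear_combination ((-1:ℤ)^K * (m - 2*((K:ℤ)+1))^e * 2) * cid
    push_cast at hinc ⊢
    linear_combination ih + hinc

lemma Sz_rec (e : ℕ) (m : ℤ) :
    Sz (e+2) m = m * Sz (e+1) m + (2*(e:ℤ) + 4 - m) * Sz (e+1) (m-2) := by
  rcases lt_or_ge m 0 with hm | hm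
  · rw [Sz_neg _ _ hm, Sz_neg _ _ hm, Sz_neg _ _ (by omega)]; ring
  rcases lt_or_ge m 2 with hm2 | hm2
  · rw [Sz_eq_SzR _ _ hm, Sz_eq_SzR _ _ hm, Sz_neg _ _ (by omega)]
    have h0 : m / 2 = 0 := by omega
    rw [h0]
    simp [SzR]
    ring
  · rw [Sz_eq_SzR _ _ hm, Sz_eq_SzR _ _ hm, Sz_eq_SzR _ _ (by omega)]
    have h2 : ((m-2) / 2).toNat + 1 = (m / 2).toNat := by omega
    rw [h2]
    exact rec_core e ((m / 2).toNat) m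

lemma Sz_one (t : ℤ) : Sz 1 t = if 0 ≤ t ∧ t ≤ 1 then 1 else 0 := by
  rcases lt_or_ge t 0 with h | h
  · rw [Sz_neg _ _ h, if_neg (by omega)]
  rcases lt_or_ge t 2 with h2 | h2
  · rw [Sz_eq_SzR _ _ h, if_pos (by omega)]
    have h0 : t / 2 = 0 := by omega
    rw [h0]
    simp [SzR]
  · rw [Sz_eq_SzR _ _ h, if_neg (by omega), SzR]
    have hK : 2 ≤ (t / 2).toNat + 1 := by omega
    rw [← Finset.sum_subset (Finset.range_subset_range.mpr hK) (by
      intro x _ hx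
      simp only [Finset.mem_range, not_lt] at hx
      rw [Nat.choose_eq_zero_of_lt (by omega)]
      simp)]
    simp [Finset.sum_range_succ]

lemma Sz_two (m : ℤ) :
    Sz 2 m = if 0 ≤ m ∧ m ≤ 1 then m else if 2 ≤ m ∧ m ≤ 3 then 4 - m else 0 := by
  have h := Sz_rec 0 m
  rw [Sz_one, Sz_one] at h
  norm_num at h
  rw [h]
  split_ifs <;> omega

lemma Sz_symm (e : ℕ) : ∀ m : ℤ, Sz (e+2) (2*(e+2) - m) = Sz (e+2) m := by
  induction e with
  | zero =>
    intro m
    rw [Sz_two, Sz_two]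
    split_ifs <;> omega
  | succ e ih =>
    intro m
    have hc : (2*(((e:ℕ)+1:ℕ):ℤ)+2) = 2*((e:ℤ)+3) - 2 := by push_cast; ring
    have h1 : 2*((e:ℤ)+3) - m = 2*((e:ℤ)+2) - (m - 2) := by ring
    have h2 : 2*((e:ℤ)+3) - m - 2 = 2*((e:ℤ)+2) - m := by ring
    have hg : (2*((↑(e+1):ℤ)+2) - m) = 2*((e:ℤ)+3) - m := by push_cast; ring
    rw [hg, Sz_rec (e+1) (2*((e:ℤ)+3) - m), Sz_rec (e+1) m,
      show e+1+1 = e+2 from rfl]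
    have e1 : Sz (e+2) (2*((e:ℤ)+3) - m) = Sz (e+2) (m-2) := by rw [h1]; exact ih (m-2)
    have e2 : Sz (e+2) (2*((e:ℤ)+3) - m - 2) = Sz (e+2) m := by rw [h2]; exact ih m
    rw [e1, e2]
    push_cast
    ring

lemma Sz_nonpos (e : ℕ) (m : ℤ) (hm : m ≤ 0) : Sz (e+2) m = 0 := by
  rcases lt_or_ge m 0 with h | h
  · exact Sz_neg _ _ h
  · have h0 : m = 0 := le_antisymm hm h
    subst h0
    rw [Sz_eq_SzR _ _ le_rfl]
    simp [SzR]

lemma Sz_big (e : ℕ) (m : ℤ) (hm : 2*((e:ℤ)+2) ≤ m) : Sz (e+2) m = 0 := by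
  have := Sz_symm e (2*((e:ℤ)+2) - m)
  rw [show (2*((e:ℤ)+2) - (2*((e:ℤ)+2) - m)) = m by ring] at this
  rw [this]
  exact Sz_nonpos e _ (by omega)

lemma Sz_pos (e : ℕ) : ∀ m : ℤ, 0 < m → m < 2*((e:ℤ)+2) → 0 < Sz (e+2) m := by
  induction e with
  | zero =>
    intro m h1 h2
    rw [Sz_two]
    split_ifs <;> omega
  | succ e ih =>
    intro m h1 h2
    have hnn : ∀ t : ℤ, 0 ≤ Sz (e+2) t := by
      intro t
      rcases le_or_gt t 0 with h | h
      · rw [Sz_nonpos e t h]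
      rcases lt_or_ge t (2*((e:ℤ)+2)) with h' | h'
      · exact le_of_lt (ih t h h')
      · rw [Sz_big e t h']
    rw [show e+1+2 = (e+1)+2 from rfl, Sz_rec (e+1) m, show e+1+1 = e+2 from rfl]
    rcases lt_or_ge m (2*((e:ℤ)+2)) with hm | hm
    · have t1 : 0 < m * Sz (e+2) m := mul_pos h1 (ih m h1 hm)
      have t2 : 0 ≤ (2*((e:ℤ)+1) + 4 - m) * Sz (e+2) (m-2) := by
        apply mul_nonneg _ (hnn _)
        push_cast at h2 ⊢
        omega
      push_cast
      linarith
    · have t1 : 0 ≤ m * Sz (e+2) m := mul_nonneg (by omega) (hnn _)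
      have t2 : 0 < (2*((e:ℤ)+1) + 4 - m) * Sz (e+2) (m-2) := by
        apply mul_pos
        · push_cast at h2 ⊢; omega
        · apply ih <;> omega
      push_cast
      linarith

lemma Sz_nonneg (e : ℕ) (m : ℤ) : 0 ≤ Sz (e+2) m := by
  rcases le_or_gt m 0 with h | h
  · rw [Sz_nonpos e m h]
  rcases lt_or_ge m (2*((e:ℤ)+2)) with h' | h'
  · exact le_of_lt (Sz_pos e m h h')
  · rw [Sz_big e m h']

lemma Sz_main (n : ℕ) (hn : 4 ≤ n) : ∀ r : ℤ, -1 ≤ r → r ≤ (n:ℤ) - 2 →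
    ((n:ℤ)+r)*((n:ℤ)+r+2)*((n:ℤ)+r+4) * Sz n ((n:ℤ)+r+2)
      ≤ ((n:ℤ)-r-2)*((n:ℤ)-r)*((n:ℤ)-r+2) * Sz n ((n:ℤ)+r) := by
  induction n, hn using Nat.le_induction with
  | base =>
    intro r h1 h2
    norm_num at h2
    interval_cases r <;> decide
  | succ n hn ih =>
    intro r h1 h2
    obtain ⟨e, rfl⟩ : ∃ e, n = e + 4 := ⟨n - 4, by omega⟩
    push_cast at h2 ⊢
    rw [show e+4+1 = e+3+2 from rfl]
    have hA1 : (e:ℤ) + 4 + 1 + r + 2 = (e:ℤ) + 7 + r := by ring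
    have hA2 : (e:ℤ) + 4 + 1 + r = (e:ℤ) + 5 + r := by ring
    rw [hA1, hA2, Sz_rec (e+3) ((e:ℤ)+7+r), Sz_rec (e+3) ((e:ℤ)+5+r),
      show e+3+1 = e+2+2 from rfl]
    have hv : (0:ℤ) ≤ Sz (e+2+2) ((e:ℤ)+7+r-2) := Sz_nonneg (e+2) _
    rcases (by omega : r = -1 ∨ r = (e:ℤ)+3 ∨ r = (e:ℤ)+2 ∨ (0 ≤ r ∧ r ≤ (e:ℤ)+1)) with
      hr | hr | hr | ⟨hr0, hr1⟩
    · -- r = -1 : symmetry, equality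
      subst hr
      have hs := Sz_symm (e+2) ((e:ℤ)+2)
      rw [show 2*((↑(e+2):ℤ)+2) - ((e:ℤ)+2) = (e:ℤ)+7+(-1) by push_cast; ring,
        show ((e:ℤ)+2) = (e:ℤ)+5+(-1)-2 by ring] at hs
      rw [hs]
      apply le_of_eq
      push_cast
      ring
    · -- r = e+3 : both sides zero
      subst hr
      rw [show ((e:ℤ)+7+((e:ℤ)+3)) = 2*((↑(e+2):ℤ)+2) + 2 by push_cast; ring]
      rw [Sz_big (e+2) _ (by omega), show 2*((↑(e+2):ℤ)+2)+2-2 = 2*((↑(e+2):ℤ)+2) by ring,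
        Sz_big (e+2) _ (by omega)]
      rw [show ((e:ℤ)+5+((e:ℤ)+3)) = 2*((↑(e+2):ℤ)+2) by push_cast; ring,
        Sz_big (e+2) _ (by omega)]
      apply le_of_eq
      push_cast
      ring
    · -- r = e+2 : boundary case using IH once
      subst hr
      have ihh := ih ((e:ℤ)+1) (by omega) (by push_cast; omega)
      rw [show ((e:ℤ)+7+((e:ℤ)+2)) = 2*((↑(e+2):ℤ)+2) + 1 by push_cast; ring,
        Sz_big (e+2) _ (by omega)]
      push_cast at ihh ⊢
      ring_nf at ihh hv ⊢
      nlinarith [ihh, hv, Int.natCast_nonneg e,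
        mul_nonneg hv (Int.natCast_nonneg e),
        mul_nonneg (mul_nonneg hv (Int.natCast_nonneg e)) (Int.natCast_nonneg e),
        mul_nonneg (mul_nonneg (mul_nonneg hv (Int.natCast_nonneg e)) (Int.natCast_nonneg e))
          (Int.natCast_nonneg e)]
    · -- main case : IH twice
      have ih1 := ih (r+1) (by omega) (by push_cast; omega)
      have ih2 := ih (r-1) (by omega) (by push_cast; omega)
      have hu : (0:ℤ) ≤ Sz (e+2+2) ((e:ℤ)+5+r-2) := Sz_nonneg (e+2) _
      have hw : (0:ℤ) ≤ Sz (e+2+2) ((e:ℤ)+7+r) := Sz_nonneg (e+2) _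
      have t1 := mul_le_mul_of_nonneg_left ih1 (by omega : (0:ℤ) ≤ (e:ℤ)+7+r)
      have t2 := mul_le_mul_of_nonneg_left ih2 (by omega : (0:ℤ) ≤ (e:ℤ)+5-r)
      have h16 : (0:ℤ) ≤ 16*r*(r+1)*(r+2) * Sz (e+2+2) ((e:ℤ)+5+r) := by
        apply mul_nonneg _ (Sz_nonneg (e+2) _)
        have : (0:ℤ) ≤ r*(r+1)*(r+2) := by positivity
        linarith
      push_cast at t1 t2 ⊢
      ring_nf at t1 t2 h16 hv hu hw ⊢
      linarith [t1, t2, h16, hv, hu, hw]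

lemma Sz_pos' (n : ℕ) (hn : 2 ≤ n) (m : ℤ) (h1 : 0 < m) (h2 : m < 2*(n:ℤ)) : 0 < Sz n m := by
  obtain ⟨e, rfl⟩ : ∃ e, n = e + 2 := ⟨n - 2, by omega⟩
  exact Sz_pos e m h1 (by push_cast at h2 ⊢; omega)

lemma Sz_nonneg' (n : ℕ) (hn : 2 ≤ n) (m : ℤ) : 0 ≤ Sz n m := by
  obtain ⟨e, rfl⟩ : ∃ e, n = e + 2 := ⟨n - 2, by omega⟩
  exact Sz_nonneg e m

lemma floor_half (m : ℤ) : ⌊((m:ℝ))/2⌋ = m / 2 := by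
  rw [Int.floor_eq_iff]
  constructor
  · have h : (2:ℝ) * ((m/2 : ℤ):ℝ) ≤ ((m:ℤ):ℝ) := by
      exact_mod_cast (by omega : 2 * (m/2) ≤ m)
    linarith
  · have h : ((m:ℤ):ℝ) < 2 * (((m/2 : ℤ):ℝ) + 1) := by
      exact_mod_cast (by omega : m < 2 * (m/2 + 1))
    linarith

lemma J_eq (n : ℕ) (r : ℤ) :
    J n (r : ℝ) = (Sz n ((n:ℤ) + r) : ℝ) / (2 ^ (n-1) * (Nat.factorial (n-1))) := by
  rw [J]
  have h1 : ((n:ℝ) + (r:ℝ)) = ((((n:ℤ) + r : ℤ)):ℝ) := by push_cast; ring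
  rw [h1, floor_half]
  rw [Sz]
  push_cast
  rw [one_div, inv_mul_eq_div]
  congr 1
  apply Finset.sum_congr rfl
  intro i hi
  simp only [Finset.mem_Icc] at hi
  rw [show (i:ℤ) = ((i.toNat : ℕ) : ℤ) from (Int.toNat_of_nonneg hi.1).symm]
  rw [zpow_natCast]
  push_cast
  rw [Int.toNat_natCast]

theorem J_ratio_upper (n : ℕ) (r : ℤ) (hn : 4 ≤ n) (hr1 : -1 ≤ r) (hr2 : r ≤ (n : ℤ) - 2) :
    J n ((r : ℝ) + 2) / J n (r : ℝ) ≤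
      (((n : ℝ) - r) / ((n : ℝ) + r + 2)) *
        ((((n : ℝ) - r - 2) * ((n : ℝ) - r + 2)) / (((n : ℝ) + r) * ((n : ℝ) + r + 4))) := by
  have hc : (0:ℝ) < 2 ^ (n-1) * (Nat.factorial (n-1)) := by positivity
  have hJ1 : J n (r : ℝ) = (Sz n ((n:ℤ) + r) : ℝ) / (2 ^ (n-1) * (Nat.factorial (n-1))) :=
    J_eq n r
  have hJ2 : J n ((r : ℝ) + 2)
      = (Sz n ((n:ℤ) + r + 2) : ℝ) / (2 ^ (n-1) * (Nat.factorial (n-1))) := by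
    rw [show ((r:ℝ) + 2) = (((r + 2 : ℤ)):ℝ) by push_cast; ring, J_eq n (r+2)]
    ring_nf
  have hS0 : (0:ℤ) < Sz n ((n:ℤ) + r) :=
    Sz_pos' n (by omega) _ (by omega) (by omega)
  have hS0R : (0:ℝ) < (Sz n ((n:ℤ) + r) : ℝ) := by exact_mod_cast hS0
  have hmain := Sz_main n hn r hr1 hr2
  have hmainR : ((n:ℝ)+r)*((n:ℝ)+r+2)*((n:ℝ)+r+4) * (Sz n ((n:ℤ)+r+2) : ℝ)
      ≤ ((n:ℝ)-r-2)*((n:ℝ)-r)*((n:ℝ)-r+2) * (Sz n ((n:ℤ)+r) : ℝ) := by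
    exact_mod_cast hmain
  have hJr_pos : 0 < J n (r : ℝ) := by
    rw [hJ1]; exact div_pos hS0R hc
  have hden : (0:ℝ) < ((n:ℝ) + r + 2) * (((n:ℝ) + r) * ((n:ℝ) + r + 4)) := by
    have b1 : (0:ℝ) < (n:ℝ) + r + 2 := by
      have : (0:ℤ) < (n:ℤ) + r + 2 := by omega
      exact_mod_cast this
    have b2 : (0:ℝ) < (n:ℝ) + r := by
      have : (0:ℤ) < (n:ℤ) + r := by omega
      exact_mod_cast this
    have b3 : (0:ℝ) < (n:ℝ) + r + 4 := by
      have : (0:ℤ) < (n:ℤ) + r + 4 := by omega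
      exact_mod_cast this
    positivity
  rw [div_mul_div_comm, div_le_div_iff₀ hJr_pos hden, hJ1, hJ2]
  rw [div_mul_eq_mul_div, mul_div_assoc']
  rw [div_le_div_iff₀ hc hc]
  have hcast : ((n:ℝ) + (r:ℝ)) = (((n:ℤ) + r : ℤ) : ℝ) := by push_cast; ring
  nlinarith [mul_le_mul_of_nonneg_right hmainR (le_of_lt hc), hc]
end

section
/- For integers m ≥ 3 and m/2 ≤ l ≤ m−1, the ratio of consecutive Eulerian numbers satisfies c_{m+1, 2l−m−1} ≤ A(m, l+1)/A(m, l) ≤ d_{m+1, 2l−m−1}, where c_{n,r} = ((n−r)²/(n+r+2)²)·((4n−7r−8)(4n+3r+6))/((4n+7r+6)(4n−3r)) and d_{n,r} = ((n−r)/(n+r+2))·((n−r−2)(n−r+2))/((n+r)(n+r+4)). -/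
def ascents (m : ℕ) (σ : Equiv.Perm (Fin m)) : ℕ :=
  (Finset.univ.filter fun i : Fin m => ∃ h : (i : ℕ) + 1 < m, σ i < σ ⟨(i : ℕ) + 1, h⟩).card

def eulerian (m l : ℕ) : ℕ :=
  Fintype.card {σ : Equiv.Perm (Fin m) // ascents m σ = l - 1}

open Equiv Finset

/-- insertion map: word of `Ψ p τ` is word of `τ` (values cast) with max inserted at `p`. -/
def Ψ {n : ℕ} (p : Fin (n+1)) (τ : Perm (Fin n)) : Perm (Fin (n+1)) :=
  (finSuccEquiv' p).trans ((τ.optionCongr).trans (finSuccEquiv' (Fin.last n)).symm)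

lemma Ψ_at {n : ℕ} (p : Fin (n+1)) (τ : Perm (Fin n)) : Ψ p τ p = Fin.last n := by
  simp [Ψ, finSuccEquiv'_at, finSuccEquiv'_symm_none]

lemma Ψ_succAbove {n : ℕ} (p : Fin (n+1)) (τ : Perm (Fin n)) (j : Fin n) :
    Ψ p τ (p.succAbove j) = (τ j).castSucc := by
  simp [Ψ, finSuccEquiv'_succAbove, finSuccEquiv'_symm_some, Fin.succAbove_last]

lemma Ψ_bijective {n : ℕ} : Function.Bijective (fun x : Fin (n+1) × Perm (Fin n) => Ψ x.1 x.2) := by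
  rw [Fintype.bijective_iff_injective_and_card]
  constructor
  · rintro ⟨p, τ⟩ ⟨q, ρ⟩ h
    simp only at h
    have hpq : p = q := by
      have h1 : Ψ p τ p = Fin.last n := Ψ_at p τ
      have h2 : Ψ q ρ q = Fin.last n := Ψ_at q ρ
      rw [h] at h1
      have := (Ψ q ρ).injective (h1.trans h2.symm)
      exact this
    subst hpq
    have : τ = ρ := by
      ext j
      have h1 := Ψ_succAbove p τ j
      have h2 := Ψ_succAbove p ρ j
      rw [h] at h1
      have := h1.symm.trans h2
      exact congrArg _ (Fin.castSucc_injective n this)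
    rw [this]
  · simp [Fintype.card_perm, Nat.factorial_succ]

lemma card_eq_sum {n t : ℕ} :
    Fintype.card {σ : Perm (Fin (n+1)) // ascents (n+1) σ = t} =
      ∑ τ : Perm (Fin n), ∑ p : Fin (n+1), if ascents (n+1) (Ψ p τ) = t then 1 else 0 := by
  classical
  have e : {x : Fin (n+1) × Perm (Fin n) // ascents (n+1) (Ψ x.1 x.2) = t} ≃
      {σ : Perm (Fin (n+1)) // ascents (n+1) σ = t} :=
    Equiv.subtypeEquiv (Equiv.ofBijective _ Ψ_bijective) (fun x => Iff.rfl)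
  rw [← Fintype.card_congr e, Fintype.card_subtype, Finset.card_filter,
    Fintype.sum_prod_type]
  exact Finset.sum_comm

open scoped Classical in
lemma cond_insert {n : ℕ} (p : Fin (n+1)) (τ : Perm (Fin n)) (j : Fin n) :
    (∃ h : ((p.succAbove j : Fin (n+1)) : ℕ) + 1 < n + 1,
        Ψ p τ (p.succAbove j) < Ψ p τ ⟨((p.succAbove j : Fin (n+1)) : ℕ) + 1, h⟩) ↔
      ((j : ℕ) + 1 = (p : ℕ) ∨ ∃ h : (j : ℕ) + 1 < n, τ j < τ ⟨(j : ℕ) + 1, h⟩) := by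
  have hw := Ψ_succAbove p τ
  by_cases hc : (j : ℕ) < (p : ℕ)
  · have hsa : p.succAbove j = j.castSucc := Fin.succAbove_of_castSucc_lt p j hc
    have hval : ((p.succAbove j : Fin (n+1)) : ℕ) = (j : ℕ) := by rw [hsa]; rfl
    by_cases h1 : (j : ℕ) + 1 = (p : ℕ)
    · constructor
      · intro _; exact Or.inl h1
      · intro _
        refine ⟨by omega, ?_⟩
        have hpt : (⟨((p.succAbove j : Fin (n+1)) : ℕ) + 1, by omega⟩ : Fin (n+1)) = p :=
          Fin.ext (by simp [hval, h1])
        rw [hpt, Ψ_at, hw]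
        exact Fin.castSucc_lt_last _
    · -- j + 1 < p
      have h2 : (j : ℕ) + 1 < (p : ℕ) := by omega
      have hjn : (j : ℕ) + 1 < n := by have := p.isLt; omega
      set j' : Fin n := ⟨(j : ℕ) + 1, hjn⟩ with hj'
      have hpt : (⟨((p.succAbove j : Fin (n+1)) : ℕ) + 1, by omega⟩ : Fin (n+1)) =
          p.succAbove j' := by
        apply Fin.ext
        have h3 : p.succAbove j' = j'.castSucc := Fin.succAbove_of_castSucc_lt p j' h2
        rw [h3]
        show ((p.succAbove j : Fin (n+1)) : ℕ) + 1 = _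
        rw [hval]
        simp [hj']
      constructor
      · rintro ⟨h, hlt⟩
        refine Or.inr ⟨hjn, ?_⟩
        rw [hpt, hw, hw] at hlt
        exact (Fin.castSucc_lt_castSucc_iff).mp hlt
      · rintro (h | ⟨h, hlt⟩)
        · omega
        · refine ⟨by omega, ?_⟩
          rw [hpt, hw, hw]
          exact (Fin.castSucc_lt_castSucc_iff).mpr hlt
  · -- p ≤ j
    have hsa : p.succAbove j = j.succ :=
      Fin.succAbove_of_le_castSucc p j
        (by rw [Fin.le_def]; simp only [Fin.coe_castSucc]; omega)
    have hval : ((p.succAbove j : Fin (n+1)) : ℕ) = (j : ℕ) + 1 := by rw [hsa]; rfl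
    by_cases hjn : (j : ℕ) + 1 < n
    · set j' : Fin n := ⟨(j : ℕ) + 1, hjn⟩ with hj'
      have hpt : (⟨((p.succAbove j : Fin (n+1)) : ℕ) + 1, by omega⟩ : Fin (n+1)) =
          p.succAbove j' := by
        apply Fin.ext
        have h3 : p.succAbove j' = j'.succ := Fin.succAbove_of_le_castSucc p j'
          (by rw [Fin.le_def]; show (p : ℕ) ≤ (j : ℕ) + 1; omega)
        rw [h3]
        show ((p.succAbove j : Fin (n+1)) : ℕ) + 1 = _
        rw [hval]
        simp [hj', Fin.val_succ]
      constructor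
      · rintro ⟨h, hlt⟩
        refine Or.inr ⟨hjn, ?_⟩
        rw [hpt, hw, hw] at hlt
        exact (Fin.castSucc_lt_castSucc_iff).mp hlt
      · rintro (h | ⟨h, hlt⟩)
        · omega
        · refine ⟨by omega, ?_⟩
          rw [hpt, hw, hw]
          exact (Fin.castSucc_lt_castSucc_iff).mpr hlt
    · constructor
      · rintro ⟨h, -⟩; omega
      · rintro (h | ⟨h, -⟩) <;> omega

open scoped Classical in
lemma ascents_sum {n : ℕ} (σ : Perm (Fin n)) :
    ascents n σ = ∑ i : Fin n,
      if (∃ h : (i : ℕ) + 1 < n, σ i < σ ⟨(i : ℕ) + 1, h⟩) then 1 else 0 := by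
  rw [ascents, Finset.card_filter]

open scoped Classical in
lemma ascents_Ψ {n : ℕ} (p : Fin (n+1)) (τ : Perm (Fin n)) :
    ascents (n+1) (Ψ p τ) = ∑ j : Fin n,
      if ((j : ℕ) + 1 = (p : ℕ) ∨ ∃ h : (j : ℕ) + 1 < n, τ j < τ ⟨(j : ℕ) + 1, h⟩)
      then 1 else 0 := by
  rw [ascents_sum, Fin.sum_univ_succAbove _ p]
  have h0 : (if (∃ h : (p : ℕ) + 1 < n + 1, Ψ p τ p < Ψ p τ ⟨(p : ℕ) + 1, h⟩)
      then 1 else 0) = 0 := by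
    rw [if_neg]
    rintro ⟨h, hlt⟩
    rw [Ψ_at] at hlt
    exact absurd hlt (Fin.not_lt.mpr (Fin.le_last _))
  rw [h0, zero_add]
  exact Finset.sum_congr rfl fun j _ => by rw [if_congr (cond_insert p τ j) rfl rfl]

open scoped Classical in
lemma ascents_Ψ_zero {n : ℕ} (τ : Perm (Fin n)) :
    ascents (n+1) (Ψ 0 τ) = ascents n τ := by
  rw [ascents_Ψ, ascents_sum]
  exact Finset.sum_congr rfl fun j _ => by
    rw [if_congr (or_iff_right (by simp)) rfl rfl]

open scoped Classical in
lemma ascents_Ψ_succ {n : ℕ} (j0 : Fin n) (τ : Perm (Fin n)) :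
    ascents (n+1) (Ψ j0.succ τ) =
      ascents n τ + (if (∃ h : (j0 : ℕ) + 1 < n, τ j0 < τ ⟨(j0 : ℕ) + 1, h⟩) then 0 else 1) := by
  rw [ascents_Ψ, ascents_sum]
  have key : ∀ j : Fin n,
      ((j : ℕ) + 1 = ((j0.succ : Fin (n+1)) : ℕ) ∨ ∃ h : (j : ℕ) + 1 < n, τ j < τ ⟨(j : ℕ) + 1, h⟩)
      ↔ (j = j0 ∨ ∃ h : (j : ℕ) + 1 < n, τ j < τ ⟨(j : ℕ) + 1, h⟩) := by
    intro j
    rw [Fin.val_succ]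
    constructor
    · rintro (h | h)
      · exact Or.inl (Fin.ext (by omega))
      · exact Or.inr h
    · rintro (h | h)
      · exact Or.inl (by rw [h])
      · exact Or.inr h
  rw [Finset.sum_congr rfl fun j _ => if_congr (key j) rfl rfl]
  rw [← Finset.add_sum_erase _ _ (Finset.mem_univ j0),
      ← Finset.add_sum_erase _ _ (Finset.mem_univ j0)]
  have herase : ∀ j ∈ Finset.univ.erase j0,
      (if (j = j0 ∨ ∃ h : (j : ℕ) + 1 < n, τ j < τ ⟨(j : ℕ) + 1, h⟩) then 1 else 0)
        = (if (∃ h : (j : ℕ) + 1 < n, τ j < τ ⟨(j : ℕ) + 1, h⟩) then (1:ℕ) else 0) := by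
    intro j hj
    have : j ≠ j0 := Finset.ne_of_mem_erase hj
    exact if_congr (by simp [this]) rfl rfl
  rw [Finset.sum_congr rfl herase]
  by_cases hc : ∃ h : (j0 : ℕ) + 1 < n, τ j0 < τ ⟨(j0 : ℕ) + 1, h⟩
  · rw [if_pos (Or.inl rfl), if_pos hc, if_pos hc]
    omega
  · rw [if_pos (Or.inl rfl), if_neg hc, if_neg hc]
    omega

open scoped Classical in
lemma sum_ascents_indicator {n : ℕ} (τ : Perm (Fin n)) :
    ∑ j : Fin n, (if (∃ h : (j : ℕ) + 1 < n, τ j < τ ⟨(j : ℕ) + 1, h⟩) then (1:ℕ) else 0)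
      = ascents n τ := (ascents_sum τ).symm

open scoped Classical in
lemma sum_not_ascents_indicator {n : ℕ} (τ : Perm (Fin n)) :
    ∑ j : Fin n, (if (∃ h : (j : ℕ) + 1 < n, τ j < τ ⟨(j : ℕ) + 1, h⟩) then (0:ℕ) else 1)
      = n - ascents n τ := by
  have h1 : ∑ j : Fin n, ((if (∃ h : (j : ℕ) + 1 < n, τ j < τ ⟨(j : ℕ) + 1, h⟩) then (1:ℕ) else 0)
      + (if (∃ h : (j : ℕ) + 1 < n, τ j < τ ⟨(j : ℕ) + 1, h⟩) then (0:ℕ) else 1)) = n := by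
    have : ∀ j : Fin n, ((if (∃ h : (j : ℕ) + 1 < n, τ j < τ ⟨(j : ℕ) + 1, h⟩) then (1:ℕ) else 0)
        + (if (∃ h : (j : ℕ) + 1 < n, τ j < τ ⟨(j : ℕ) + 1, h⟩) then (0:ℕ) else 1)) = 1 := by
      intro j; split <;> rfl
    rw [Finset.sum_congr rfl fun j _ => this j]
    simp
  rw [Finset.sum_add_distrib, sum_ascents_indicator] at h1
  omega

lemma ascents_le {n : ℕ} (τ : Perm (Fin n)) : ascents n τ ≤ n := by
  classical
  rw [ascents_sum]
  calc ∑ j : Fin n, (if (∃ h : (j : ℕ) + 1 < n, τ j < τ ⟨(j : ℕ) + 1, h⟩) then (1:ℕ) else 0)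
      ≤ ∑ _j : Fin n, 1 := Finset.sum_le_sum (fun j _ => by split <;> omega)
    _ = n := by simp

open scoped Classical in
lemma inner_count {n k : ℕ} (τ : Perm (Fin n)) :
    ∑ p : Fin (n+1), (if ascents (n+1) (Ψ p τ) = k+1 then (1:ℕ) else 0)
      = (if ascents n τ = k+1 then (k+2) else 0) + (if ascents n τ = k then (n-k) else 0) := by
  rw [Fin.sum_univ_succ]
  rw [ascents_Ψ_zero]
  have hterm : ∀ j : Fin n, (if ascents (n+1) (Ψ j.succ τ) = k+1 then (1:ℕ) else 0)
      = (if (ascents n τ + (if (∃ h : (j : ℕ) + 1 < n, τ j < τ ⟨(j : ℕ) + 1, h⟩) then 0 else 1)) = k+1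
         then (1:ℕ) else 0) := fun j => by rw [ascents_Ψ_succ]
  rw [Finset.sum_congr rfl fun j _ => hterm j]
  by_cases h1 : ascents n τ = k+1
  · have : ∀ j : Fin n, (if (ascents n τ + (if (∃ h : (j : ℕ) + 1 < n, τ j < τ ⟨(j : ℕ) + 1, h⟩) then 0 else 1)) = k+1
        then (1:ℕ) else 0)
        = (if (∃ h : (j : ℕ) + 1 < n, τ j < τ ⟨(j : ℕ) + 1, h⟩) then (1:ℕ) else 0) := by
      intro j
      by_cases hc : (∃ h : (j : ℕ) + 1 < n, τ j < τ ⟨(j : ℕ) + 1, h⟩) <;>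
        simp [hc, h1]
    rw [Finset.sum_congr rfl fun j _ => this j, sum_ascents_indicator, h1]
    simp
    omega
  · by_cases h0 : ascents n τ = k
    · have : ∀ j : Fin n, (if (ascents n τ + (if (∃ h : (j : ℕ) + 1 < n, τ j < τ ⟨(j : ℕ) + 1, h⟩) then 0 else 1)) = k+1
          then (1:ℕ) else 0)
          = (if (∃ h : (j : ℕ) + 1 < n, τ j < τ ⟨(j : ℕ) + 1, h⟩) then (0:ℕ) else 1) := by
        intro j
        by_cases hc : (∃ h : (j : ℕ) + 1 < n, τ j < τ ⟨(j : ℕ) + 1, h⟩) <;>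
          simp [hc, h0]
      rw [Finset.sum_congr rfl fun j _ => this j, sum_not_ascents_indicator, h0]
      simp
    · have : ∀ j : Fin n, (if (ascents n τ + (if (∃ h : (j : ℕ) + 1 < n, τ j < τ ⟨(j : ℕ) + 1, h⟩) then 0 else 1)) = k+1
          then (1:ℕ) else 0) = 0 := by
        intro j
        by_cases hc : (∃ h : (j : ℕ) + 1 < n, τ j < τ ⟨(j : ℕ) + 1, h⟩) <;>
          simp [hc] <;> omega
      rw [Finset.sum_congr rfl fun j _ => this j]
      simp [h1, h0]

open scoped Classical in
lemma inner_count0 {n : ℕ} (τ : Perm (Fin n)) :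
    ∑ p : Fin (n+1), (if ascents (n+1) (Ψ p τ) = 0 then (1:ℕ) else 0)
      = (if ascents n τ = 0 then 1 else 0) := by
  rw [Fin.sum_univ_succ, ascents_Ψ_zero]
  have : ∀ j : Fin n, (if ascents (n+1) (Ψ j.succ τ) = 0 then (1:ℕ) else 0)
      = (if (ascents n τ = 0 ∧ (∃ h : (j : ℕ) + 1 < n, τ j < τ ⟨(j : ℕ) + 1, h⟩)) then 1 else 0) := by
    intro j
    rw [ascents_Ψ_succ]
    by_cases hc : (∃ h : (j : ℕ) + 1 < n, τ j < τ ⟨(j : ℕ) + 1, h⟩) <;> simp [hc]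
  rw [Finset.sum_congr rfl fun j _ => this j]
  by_cases h0 : ascents n τ = 0
  · have : ∀ j : Fin n, (if (ascents n τ = 0 ∧ (∃ h : (j : ℕ) + 1 < n, τ j < τ ⟨(j : ℕ) + 1, h⟩)) then (1:ℕ) else 0)
        = (if (∃ h : (j : ℕ) + 1 < n, τ j < τ ⟨(j : ℕ) + 1, h⟩) then (1:ℕ) else 0) := by
      intro j
      by_cases hc : (∃ h : (j : ℕ) + 1 < n, τ j < τ ⟨(j : ℕ) + 1, h⟩) <;> simp [hc, h0]
    rw [Finset.sum_congr rfl fun j _ => this j, sum_ascents_indicator, h0]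
    simp
  · simp [h0]

open scoped Classical in
lemma sum_indicator_card {n c s : ℕ} :
    ∑ τ : Perm (Fin n), (if ascents n τ = s then (c:ℕ) else 0)
      = c * Fintype.card {τ : Perm (Fin n) // ascents n τ = s} := by
  rw [Fintype.card_subtype, ← Finset.sum_filter, Finset.sum_const, smul_eq_mul, mul_comm]

lemma eulerian_succ_succ (n k : ℕ) :
    eulerian (n+1) (k+2) = (k+2) * eulerian n (k+2) + (n-k) * eulerian n (k+1) := by
  classical
  show Fintype.card {σ : Perm (Fin (n+1)) // ascents (n+1) σ = k+1}
      = (k+2) * eulerian n (k+2) + (n-k) * eulerian n (k+1)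
  rw [card_eq_sum, Finset.sum_congr rfl fun τ _ => inner_count τ, Finset.sum_add_distrib,
    sum_indicator_card, sum_indicator_card]
  rfl

lemma eulerian_one_succ (n : ℕ) : eulerian (n+1) 1 = eulerian n 1 := by
  classical
  show Fintype.card {σ : Perm (Fin (n+1)) // ascents (n+1) σ = 0}
      = eulerian n 1
  rw [card_eq_sum, Finset.sum_congr rfl fun τ _ => inner_count0 τ]
  have := @sum_indicator_card n 1 0
  simp only [one_mul] at this
  rw [this]
  rfl

/-- recursive model of Eulerian numbers -/
def EN : ℕ → ℕ → ℕ
  | 0, l => if l = 1 then 1 else 0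
  | m+1, l => if l = 0 then 0 else l * EN m l + (m+2-l) * EN m (l-1)

lemma EN_zero_right (m : ℕ) : EN m 0 = 0 := by
  cases m <;> simp [EN]

lemma eulerian_zero (l : ℕ) (hl : 1 ≤ l) : eulerian 0 l = if l = 1 then 1 else 0 := by
  classical
  have hasc : ∀ σ : Perm (Fin 0), ascents 0 σ = 0 := fun σ => by simp [ascents]
  rw [eulerian, Fintype.card_subtype]
  by_cases h : l = 1
  · subst h
    simp [hasc, Fintype.card_perm]
  · rw [if_neg h]
    have hne : ∀ σ : Perm (Fin 0), ¬ (ascents 0 σ = l - 1) := fun σ => by rw [hasc]; omega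
    simp [hne]

lemma eulerian_eq_EN (m : ℕ) : ∀ l, 1 ≤ l → eulerian m l = EN m l := by
  induction m with
  | zero =>
    intro l hl
    rw [eulerian_zero l hl]
    simp [EN]
  | succ m ih =>
    intro l hl
    match l, hl with
    | 1, _ =>
      rw [eulerian_one_succ, ih 1 le_rfl]
      simp [EN, EN_zero_right]
    | (k+2), _ =>
      rw [eulerian_succ_succ, ih (k+2) (by omega), ih (k+1) (by omega)]
      have h2 : m + 2 - (k+2) = m - k := by omega
      simp [EN, h2]

lemma EN_eq_zero (m : ℕ) : ∀ l, m + 2 ≤ l → EN m l = 0 := by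
  induction m with
  | zero => intro l h; simp [EN]; omega
  | succ m ih =>
    intro l h
    rw [EN, if_neg (by omega), ih l (by omega), ih (l-1) (by omega)]
    ring

lemma EN_top_zero (m : ℕ) (hm : 1 ≤ m) : EN m (m+1) = 0 := by
  obtain ⟨m', rfl⟩ : ∃ m', m = m' + 1 := ⟨m - 1, by omega⟩
  rw [EN, if_neg (by omega), EN_eq_zero m' (m'+2) le_rfl]
  have : m' + 2 - (m' + 2) = 0 := by omega
  rw [this]
  ring

lemma EN_pos (m : ℕ) : ∀ l, 1 ≤ l → l ≤ m → 0 < EN m l := by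
  induction m with
  | zero => intro l h1 h2; omega
  | succ m ih =>
    intro l h1 h2
    rw [EN, if_neg (by omega)]
    rcases Nat.lt_or_ge l (m+1) with h | h
    · have := ih l h1 (by omega)
      have hl : 1 ≤ l * EN m l := Nat.mul_le_mul h1 this
      omega
    · have hlm : l = m + 1 := by omega
      subst hlm
      rcases Nat.eq_zero_or_pos m with hm | hm
      · subst hm; simp [EN]
      · have := ih m hm le_rfl
        have h2 : m + 1 - 1 = m := by omega
        have h3 : m + 2 - (m+1) = 1 := by omega
        rw [h2, h3]
        omega

lemma EN_symm (m : ℕ) : ∀ l, 1 ≤ l → l ≤ m → EN m (m + 1 - l) = EN m l := by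
  induction m with
  | zero => intro l h1 h2; omega
  | succ m ih =>
    intro l h1 h2
    rcases Nat.eq_zero_or_pos m with hm0 | hm0
    · subst hm0
      have : l = 1 := by omega
      subst this
      rfl
    rw [EN, if_neg (by omega), EN, if_neg (by omega)]
    have e1 : m + 2 - (m + 2 - l) = l := by omega
    rw [e1]
    have e2 : m + 2 - l - 1 = m + 1 - l := by omega
    rw [e2]
    have hA : EN m (m + 1 - l) = EN m l := by
      rcases Nat.lt_or_ge m l with h | h
      · have hl : l = m + 1 := by omega
        subst hl
        simp [EN_zero_right, EN_top_zero m hm0]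
      · exact ih l h1 h
    have hB : EN m (m + 2 - l) = EN m (l - 1) := by
      rcases Nat.lt_or_ge l 2 with h | h
      · have hl : l = 1 := by omega
        subst hl
        simp [EN_zero_right, EN_top_zero m hm0]
      · have : m + 2 - l = m + 1 - (l - 1) := by omega
        rw [this]
        exact ih (l-1) (by omega) (by omega)
    rw [hA, hB]
    ring

noncomputable def Pd (M L : ℝ) : ℝ := (M - L + 1) * (M - L) * (M - L + 2)
noncomputable def Qd (L : ℝ) : ℝ := L * (L + 1) * (L + 2)
noncomputable def Pc (M L : ℝ) : ℝ := (M - L + 1)^2 * ((11*M - 14*L + 3) * (M + 6*L + 7))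
noncomputable def Qc (M L : ℝ) : ℝ := (L + 1)^2 * ((14*L - 3*M + 3) * (7*M - 6*L + 7))

lemma keyU (M L : ℝ) (hS : 0 ≤ 2*L - M - 2) (hW : 0 ≤ M - L) :
    ((L+1) * Pd M L + (M+1-L) * Qd L) * Pd M (L-1) ≤
      Pd (M+1) L * L * Pd M (L-1) + Pd (M+1) L * (M+2-L) * Qd (L-1) := by
  rw [← sub_nonneg]
  have hid : Pd (M+1) L * L * Pd M (L-1) + Pd (M+1) L * (M+2-L) * Qd (L-1)
      - ((L+1) * Pd M L + (M+1-L) * Qd L) * Pd M (L-1)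
      = ((2*L-M-2) * (2*L-M-1)) * ((2*L-M) * ((M-L+1) * ((M-L+2) * (M-L+3)))) := by
    unfold Pd Qd; ring
  rw [hid]
  have h1 : (0:ℝ) ≤ 2*L-M-1 := by linarith
  have h2 : (0:ℝ) ≤ 2*L-M := by linarith
  have h3 : (0:ℝ) ≤ M-L+1 := by linarith
  have h4 : (0:ℝ) ≤ M-L+2 := by linarith
  have h5 : (0:ℝ) ≤ M-L+3 := by linarith
  positivity

set_option maxHeartbeats 3000000 in
lemma keyL (M L : ℝ) (hS' : 0 ≤ 2*L - M - 2) (hW' : 0 ≤ M - L) :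
    Pc (M+1) L * L * (Pc M (L-1) * Qc M L) + Pc (M+1) L * (M+2-L) * (Qc M (L-1) * Qc M L)
      ≤ Qc (M+1) L * (L+1) * (Pc M L * Pc M (L-1))
        + Qc (M+1) L * (M+1-L) * (Pc M (L-1) * Qc M L) := by
  rw [← sub_nonneg]
  set S : ℝ := 2*L - M - 2 with hSdef
  set W : ℝ := M - L with hWdef
  have hS : 0 ≤ S := hS'
  have hW : 0 ≤ W := hW'
  have hid : Qc (M+1) L * (L+1) * (Pc M L * Pc M (L-1))
        + Qc (M+1) L * (M+1-L) * (Pc M (L-1) * Qc M L)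
      - (Pc (M+1) L * L * (Pc M (L-1) * Qc M L)
        + Pc (M+1) L * (M+2-L) * (Qc M (L-1) * Qc M L))
      = 75271680 * S ^ 0 * W ^ 0 +
      364801536 * S ^ 0 * W ^ 1 +
      774067968 * S ^ 0 * W ^ 2 +
      946340352 * S ^ 0 * W ^ 3 +
      736903136 * S ^ 0 * W ^ 4 +
      380650400 * S ^ 0 * W ^ 5 +
      131358880 * S ^ 0 * W ^ 6 +
      29614688 * S ^ 0 * W ^ 7 +
      4100224 * S ^ 0 * W ^ 8 +
      303104 * S ^ 0 * W ^ 9 +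
      8192 * S ^ 0 * W ^ 10 +
      396326304 * S ^ 1 * W ^ 0 +
      1830983472 * S ^ 1 * W ^ 1 +
      3693924408 * S ^ 1 * W ^ 2 +
      4277320692 * S ^ 1 * W ^ 3 +
      3137284192 * S ^ 1 * W ^ 4 +
      1514199764 * S ^ 1 * W ^ 5 +
      482206448 * S ^ 1 * W ^ 6 +
      98242080 * S ^ 1 * W ^ 7 +
      11796352 * S ^ 1 * W ^ 8 +
      679936 * S ^ 1 * W ^ 9 +
      8192 * S ^ 1 * W ^ 10 +
      886066488 * S ^ 2 * W ^ 0 +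
      3851760384 * S ^ 2 * W ^ 1 +
      7283287742 * S ^ 2 * W ^ 2 +
      7862406578 * S ^ 2 * W ^ 3 +
      5337577410 * S ^ 2 * W ^ 4 +
      2360899046 * S ^ 2 * W ^ 5 +
      679330288 * S ^ 2 * W ^ 6 +
      122331040 * S ^ 2 * W ^ 7 +
      12465792 * S ^ 2 * W ^ 8 +
      544768 * S ^ 2 * W ^ 9 +
      1107435948 * S ^ 3 * W ^ 0 +
      4463325804 * S ^ 3 * W ^ 1 +
      7774113127 * S ^ 3 * W ^ 2 +
      7662738548 * S ^ 3 * W ^ 3 +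
      4693286871 * S ^ 3 * W ^ 4 +
      1841989442 * S ^ 3 * W ^ 5 +
      459145520 * S ^ 3 * W ^ 6 +
      69047520 * S ^ 3 * W ^ 7 +
      5525376 * S ^ 3 * W ^ 8 +
      167936 * S ^ 3 * W ^ 9 +
      857286308 * S ^ 4 * W ^ 0 +
      3149948684 * S ^ 4 * W ^ 1 +
      4950119589 * S ^ 4 * W ^ 2 +
      4338866366 * S ^ 4 * W ^ 3 +
      2314505205 * S ^ 4 * W ^ 4 +
      766661060 * S ^ 4 * W ^ 5 +
      153175504 * S ^ 4 * W ^ 6 +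
      16738752 * S ^ 4 * W ^ 7 +
      755712 * S ^ 4 * W ^ 8 +
      429914044 * S ^ 5 * W ^ 0 +
      1412119004 * S ^ 5 * W ^ 1 +
      1952859447 * S ^ 5 * W ^ 2 +
      1472454512 * S ^ 5 * W ^ 3 +
      652675722 * S ^ 5 * W ^ 4 +
      169665776 * S ^ 5 * W ^ 5 +
      23868128 * S ^ 5 * W ^ 6 +
      1394880 * S ^ 5 * W ^ 7 +
      141591236 * S ^ 6 * W ^ 0 +
      405782172 * S ^ 6 * W ^ 1 +
      478314185 * S ^ 6 * W ^ 2 +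
      296624910 * S ^ 6 * W ^ 3 +
      101954792 * S ^ 6 * W ^ 4 +
      18384630 * S ^ 6 * W ^ 5 +
      1355424 * S ^ 6 * W ^ 6 +
      30279940 * S ^ 7 * W ^ 0 +
      73307204 * S ^ 7 * W ^ 1 +
      70430429 * S ^ 7 * W ^ 2 +
      33550612 * S ^ 7 * W ^ 3 +
      7918911 * S ^ 7 * W ^ 4 +
      740154 * S ^ 7 * W ^ 5 +
      4035500 * S ^ 8 * W ^ 0 +
      7881124 * S ^ 8 * W ^ 1 +
      5755111 * S ^ 8 * W ^ 2 +
      1862018 * S ^ 8 * W ^ 3 +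
      225153 * S ^ 8 * W ^ 4 +
      305140 * S ^ 9 * W ^ 0 +
      448580 * S ^ 9 * W ^ 1 +
      219725 * S ^ 9 * W ^ 2 +
      35860 * S ^ 9 * W ^ 3 +
      10164 * S ^ 10 * W ^ 0 +
      10164 * S ^ 10 * W ^ 1 +
      2541 * S ^ 10 * W ^ 2 := by
    unfold Pc Qc
    rw [hSdef, hWdef]
    ring
  rw [hid]
  have hmono : ∀ i j : ℕ, (0:ℝ) ≤ S ^ i * W ^ j :=
    fun i j => mul_nonneg (pow_nonneg hS i) (pow_nonneg hW j)
  repeat' apply add_nonneg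
  all_goals
    exact mul_nonneg (mul_nonneg (by norm_num) (pow_nonneg hS _)) (pow_nonneg hW _)

set_option maxHeartbeats 2000000 in
lemma main_bounds : ∀ m : ℕ, 3 ≤ m → ∀ l : ℕ, m ≤ 2*l → l ≤ m →
    Pc (m:ℝ) (l:ℝ) * (EN m l : ℝ) ≤ Qc (m:ℝ) (l:ℝ) * (EN m (l+1) : ℝ) ∧
    Qd (l:ℝ) * (EN m (l+1) : ℝ) ≤ Pd (m:ℝ) (l:ℝ) * (EN m l : ℝ) := by
  intro m hm
  induction m, hm using Nat.le_induction with
  | base =>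
    intro l h2l hl
    have hl2 : 2 ≤ l := by omega
    interval_cases l
    · have e2 : EN 3 2 = 4 := by decide
      have e3 : EN 3 3 = 1 := by decide
      rw [e2, e3]
      unfold Pc Qc Pd Qd
      norm_num
    · have e3 : EN 3 3 = 1 := by decide
      have e4 : EN 3 4 = 0 := by decide
      rw [e3, e4]
      unfold Pc Qc Pd Qd
      norm_num
  | succ m hm ih =>
    intro l h2l hl
    have hM1 : ((m+1:ℕ):ℝ) = (m:ℝ) + 1 := by push_cast; ring
    by_cases hcase1 : l = m + 1
    · subst hcase1
      rw [EN_top_zero (m+1) (by omega)]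
      constructor
      · have hPc : Pc ((m+1:ℕ):ℝ) ((m+1:ℕ):ℝ) ≤ 0 := by
          have hx : (4:ℝ) ≤ ((m+1:ℕ):ℝ) := by exact_mod_cast Nat.succ_le_succ hm
          unfold Pc
          nlinarith [hx]
        have hE : (0:ℝ) ≤ (EN (m+1) (m+1) : ℝ) := Nat.cast_nonneg _
        push_cast
        push_cast at hPc hE
        nlinarith [mul_nonneg (neg_nonneg.mpr hPc) hE]
      · have hPd : Pd ((m+1:ℕ):ℝ) ((m+1:ℕ):ℝ) = 0 := by unfold Pd; ring
        rw [hPd]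
        simp
    · have hlm : l ≤ m := by omega
      by_cases hcase2 : m + 1 = 2*l
      · have hsym : EN (m+1) (l+1) = EN (m+1) l := by
          have h := EN_symm (m+1) l (by omega) (by omega)
          rwa [show m+1+1-l = l+1 from by omega] at h
        have hMR : ((m+1:ℕ):ℝ) = 2*(l:ℝ) := by
          have : ((m+1:ℕ):ℝ) = ((2*l:ℕ):ℝ) := by exact_mod_cast congrArg (Nat.cast (R := ℝ)) hcase2
          rw [this]; push_cast; ring
        rw [hsym]
        constructor
        · have heq : Pc ((m+1:ℕ):ℝ) ((l:ℕ):ℝ) = Qc ((m+1:ℕ):ℝ) ((l:ℕ):ℝ) := by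
            unfold Pc Qc; rw [hMR]; ring
          rw [heq]
        · have heq : Pd ((m+1:ℕ):ℝ) ((l:ℕ):ℝ) = Qd ((l:ℕ):ℝ) := by
            unfold Pd Qd; rw [hMR]; ring
          rw [heq]
      · -- main case : m + 2 ≤ 2*l, l ≤ m
        have hstep : m + 2 ≤ 2*l := by omega
        have hl3 : 3 ≤ l := by omega
        -- recurrences
        have r1n : EN (m+1) (l+1) = (l+1) * EN m (l+1) + (m+1-l) * EN m l := by
          rw [EN, if_neg (by omega)]
          rw [show m + 2 - (l+1) = m+1-l from by omega, show l + 1 - 1 = l from by omega]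
        have r0n : EN (m+1) l = l * EN m l + (m+2-l) * EN m (l-1) := by
          rw [EN, if_neg (by omega)]
        have r1 : (EN (m+1) (l+1) : ℝ)
            = ((l:ℝ)+1) * (EN m (l+1) : ℝ) + ((m:ℝ)+1-(l:ℝ)) * (EN m l : ℝ) := by
          rw [r1n]; push_cast [Nat.cast_sub (show l ≤ m+1 by omega)]; ring
        have r0 : (EN (m+1) l : ℝ)
            = (l:ℝ) * (EN m l : ℝ) + ((m:ℝ)+2-(l:ℝ)) * (EN m (l-1) : ℝ) := by
          rw [r0n]; push_cast [Nat.cast_sub (show l ≤ m+2 by omega)]; ring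
        have IH1 := ih l (by omega) hlm
        have IH2 := ih (l-1) (by omega) (by omega)
        rw [show l - 1 + 1 = l from by omega,
          show ((l-1:ℕ):ℝ) = (l:ℝ)-1 from by push_cast [Nat.cast_sub (show 1 ≤ l by omega)]; ring]
          at IH2
        -- numbers
        have hz : (0:ℝ) < (EN m (l-1) : ℝ) := by
          exact_mod_cast EN_pos m (l-1) (by omega) (by omega)
        have hy : (0:ℝ) < (EN m l : ℝ) := by exact_mod_cast EN_pos m l (by omega) hlm
        have hx : (0:ℝ) ≤ (EN m (l+1) : ℝ) := Nat.cast_nonneg _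
        have hLr : (3:ℝ) ≤ (l:ℝ) := by exact_mod_cast hl3
        have hMr : (3:ℝ) ≤ (m:ℝ) := by exact_mod_cast hm
        have hWr : (0:ℝ) ≤ (m:ℝ) - (l:ℝ) := by
          have : (l:ℝ) ≤ (m:ℝ) := by exact_mod_cast hlm
          linarith
        have hSr : (0:ℝ) ≤ 2*(l:ℝ) - (m:ℝ) - 2 := by
          have : ((m:ℝ)+2) ≤ 2*(l:ℝ) := by exact_mod_cast hstep
          linarith
        rw [r1, r0, hM1]
        set M : ℝ := (m:ℝ) with hMdef
        set L : ℝ := (l:ℝ) with hLdef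
        set x : ℝ := (EN m (l+1) : ℝ) with hxdef
        set y : ℝ := (EN m l : ℝ) with hydef
        set z : ℝ := (EN m (l-1) : ℝ) with hzdef
        have hPdML1 : 0 < Pd M (L-1) := by
          unfold Pd
          have f1 : (0:ℝ) < M - (L-1) + 1 := by linarith
          have f2 : (0:ℝ) < M - (L-1) := by linarith
          have f3 : (0:ℝ) < M - (L-1) + 2 := by linarith
          exact mul_pos (mul_pos f1 f2) f3
        have hPd2 : 0 ≤ Pd (M+1) L := by
          unfold Pd
          have f1 : (0:ℝ) ≤ M + 1 - L + 1 := by linarith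
          have f2 : (0:ℝ) ≤ M + 1 - L := by linarith
          have f3 : (0:ℝ) ≤ M + 1 - L + 2 := by linarith
          exact mul_nonneg (mul_nonneg f1 f2) f3
        constructor
        · -- lower bound (Pc/Qc)
          rcases (show 11*m + 14 ≤ 14*l ∨ 14*l ≤ 11*m + 13 from by omega) with hsgn | hsgn
          · -- trivial branch : Pc (M+1) L ≤ 0
            have hsgnr : 11*M + 14 ≤ 14*L := by
              rw [hMdef, hLdef]; exact_mod_cast hsgn
            have h2 : (11*(M+1) - 14*L + 3) * ((M+1) + 6*L + 7) ≤ 0 :=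
              mul_nonpos_iff.mpr (Or.inr ⟨by linarith, by linarith⟩)
            have hnp : Pc (M+1) L ≤ 0 := by
              unfold Pc
              nlinarith [sq_nonneg (M+1-L+1), h2]
            have hQc2 : 0 ≤ Qc (M+1) L := by
              unfold Qc
              exact mul_nonneg (sq_nonneg _)
                (mul_nonneg (by linarith) (by linarith))
            have hE0 : (0:ℝ) ≤ L * y + (M+2-L) * z := by nlinarith
            have hE1 : (0:ℝ) ≤ (L+1) * x + (M+1-L) * y := by nlinarith
            calc Pc (M+1) L * (L * y + (M+2-L) * z) ≤ 0 :=
                  mul_nonpos_iff.mpr (Or.inr ⟨hnp, hE0⟩)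
              _ ≤ Qc (M+1) L * ((L+1) * x + (M+1-L) * y) := mul_nonneg hQc2 hE1
          · -- main branch
            have hsgnr : 14*L ≤ 11*M + 13 := by
              rw [hMdef, hLdef]; exact_mod_cast hsgn
            have hQc0 : 0 < Qc M L := by
              unfold Qc
              exact mul_pos (pow_pos (by linarith) 2)
                (mul_pos (by linarith) (by linarith))
            have hQc1 : 0 < Qc M (L-1) := by
              unfold Qc
              exact mul_pos (pow_pos (by linarith) 2)
                (mul_pos (by linarith) (by linarith))
            have hQc2 : 0 < Qc (M+1) L := by
              unfold Qc
              exact mul_pos (pow_pos (by linarith) 2)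
                (mul_pos (by linarith) (by linarith))
            have hPc1 : 0 < Pc M (L-1) := by
              unfold Pc
              exact mul_pos (pow_pos (by linarith) 2)
                (mul_pos (by linarith) (by linarith))
            have hPc2 : 0 ≤ Pc (M+1) L := by
              unfold Pc
              exact mul_nonneg (sq_nonneg _)
                (mul_nonneg (by linarith) (by linarith))
            have u1 : 0 ≤ (Qc (M+1) L * (L+1) * Pc M (L-1)) * (Qc M L * x - Pc M L * y) :=
              mul_nonneg (mul_nonneg (mul_nonneg hQc2.le (by linarith)) hPc1.le)
                (by linarith [IH1.1])
            have u2 : 0 ≤ (Pc (M+1) L * (M+2-L) * Qc M L) * (Qc M (L-1) * y - Pc M (L-1) * z) :=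
              mul_nonneg (mul_nonneg (mul_nonneg hPc2 (by linarith)) hQc0.le)
                (by linarith [IH2.1])
            have u3 : 0 ≤ y * ((Qc (M+1) L * (L+1) * (Pc M L * Pc M (L-1))
                + Qc (M+1) L * (M+1-L) * (Pc M (L-1) * Qc M L))
                - (Pc (M+1) L * L * (Pc M (L-1) * Qc M L)
                + Pc (M+1) L * (M+2-L) * (Qc M (L-1) * Qc M L))) :=
              mul_nonneg hy.le (sub_nonneg.mpr (keyL M L hSr hWr))
            rw [← sub_nonneg]
            have hfin : (Qc (M+1) L * ((L+1) * x + (M+1-L) * y)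
                - Pc (M+1) L * (L * y + (M+2-L) * z)) * (Pc M (L-1) * Qc M L)
                = (Qc (M+1) L * (L+1) * Pc M (L-1)) * (Qc M L * x - Pc M L * y)
                + (Pc (M+1) L * (M+2-L) * Qc M L) * (Qc M (L-1) * y - Pc M (L-1) * z)
                + y * ((Qc (M+1) L * (L+1) * (Pc M L * Pc M (L-1))
                + Qc (M+1) L * (M+1-L) * (Pc M (L-1) * Qc M L))
                - (Pc (M+1) L * L * (Pc M (L-1) * Qc M L)
                + Pc (M+1) L * (M+2-L) * (Qc M (L-1) * Qc M L))) := by ring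
            have hprod : 0 < Pc M (L-1) * Qc M L := mul_pos hPc1 hQc0
            have := (mul_nonneg_iff_of_pos_right hprod).mp (by rw [hfin]; linarith)
            exact this
        · -- upper bound (Pd/Qd)
          have t1 : 0 ≤ ((L+1) * Pd M (L-1)) * (Pd M L * y - Qd L * x) :=
            mul_nonneg (mul_nonneg (by linarith) hPdML1.le) (by linarith [IH1.2])
          have t2 : 0 ≤ (Pd (M+1) L * (M+2-L)) * (Pd M (L-1) * z - Qd (L-1) * y) :=
            mul_nonneg (mul_nonneg hPd2 (by linarith)) (by linarith [IH2.2])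
          have t3 : 0 ≤ y * ((Pd (M+1) L * L * Pd M (L-1) + Pd (M+1) L * (M+2-L) * Qd (L-1))
              - ((L+1) * Pd M L + (M+1-L) * Qd L) * Pd M (L-1)) :=
            mul_nonneg hy.le (sub_nonneg.mpr (keyU M L hSr hWr))
          rw [← sub_nonneg]
          have hfin : (Pd (M+1) L * (L * y + (M+2-L) * z)
              - Qd L * ((L+1) * x + (M+1-L) * y)) * Pd M (L-1)
              = ((L+1) * Pd M (L-1)) * (Pd M L * y - Qd L * x)
              + (Pd (M+1) L * (M+2-L)) * (Pd M (L-1) * z - Qd (L-1) * y)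
              + y * ((Pd (M+1) L * L * Pd M (L-1) + Pd (M+1) L * (M+2-L) * Qd (L-1))
              - ((L+1) * Pd M L + (M+1-L) * Qd L) * Pd M (L-1)) := by ring
          exact (mul_nonneg_iff_of_pos_right hPdML1).mp (by rw [hfin]; linarith)

set_option maxHeartbeats 1000000 in
theorem eulerian_ratio_bounds (m l : ℕ) (hm : 3 ≤ m) (h2l : m ≤ 2 * l) (hl : l ≤ m - 1) :
    ((((m : ℝ) + 1) - (2 * (l : ℝ) - (m : ℝ) - 1)) ^ 2 /
        (((m : ℝ) + 1) + (2 * (l : ℝ) - (m : ℝ) - 1) + 2) ^ 2) *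
      (((4 * ((m : ℝ) + 1) - 7 * (2 * (l : ℝ) - (m : ℝ) - 1) - 8) *
          (4 * ((m : ℝ) + 1) + 3 * (2 * (l : ℝ) - (m : ℝ) - 1) + 6)) /
        ((4 * ((m : ℝ) + 1) + 7 * (2 * (l : ℝ) - (m : ℝ) - 1) + 6) *
          (4 * ((m : ℝ) + 1) - 3 * (2 * (l : ℝ) - (m : ℝ) - 1)))) ≤
      (eulerian m (l + 1) : ℝ) / (eulerian m l : ℝ) ∧
    (eulerian m (l + 1) : ℝ) / (eulerian m l : ℝ) ≤
      ((((m : ℝ) + 1) - (2 * (l : ℝ) - (m : ℝ) - 1)) /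
          (((m : ℝ) + 1) + (2 * (l : ℝ) - (m : ℝ) - 1) + 2)) *
        (((((m : ℝ) + 1) - (2 * (l : ℝ) - (m : ℝ) - 1) - 2) *
            (((m : ℝ) + 1) - (2 * (l : ℝ) - (m : ℝ) - 1) + 2)) /
          ((((m : ℝ) + 1) + (2 * (l : ℝ) - (m : ℝ) - 1)) *
            (((m : ℝ) + 1) + (2 * (l : ℝ) - (m : ℝ) - 1) + 4))) := by
  have hl2 : 2 ≤ l := by omega
  have hlm : l + 1 ≤ m := by omega
  have h := main_bounds m hm l h2l (by omega)
  have e1 : eulerian m (l+1) = EN m (l+1) := eulerian_eq_EN m (l+1) (by omega)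
  have e0 : eulerian m l = EN m l := eulerian_eq_EN m l (by omega)
  rw [e1, e0]
  have hy : (0:ℝ) < (EN m l : ℝ) := by exact_mod_cast EN_pos m l (by omega) (by omega)
  have hx : (0:ℝ) ≤ (EN m (l+1) : ℝ) := Nat.cast_nonneg _
  have hMr : (3:ℝ) ≤ (m:ℝ) := by exact_mod_cast hm
  have hLr : (2:ℝ) ≤ (l:ℝ) := by exact_mod_cast hl2
  have hML : (l:ℝ) + 1 ≤ (m:ℝ) := by exact_mod_cast hlm
  have hSm : (m:ℝ) ≤ 2*(l:ℝ) := by exact_mod_cast h2l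
  set M : ℝ := (m:ℝ) with hMdef
  set L : ℝ := (l:ℝ) with hLdef
  have hQcpos : 0 < Qc M L := by
    unfold Qc
    exact mul_pos (pow_pos (by linarith) 2) (mul_pos (by linarith) (by linarith))
  have hQdpos : 0 < Qd L := by
    unfold Qd
    exact mul_pos (mul_pos (by linarith) (by linarith)) (by linarith)
  have hn1 : ((M+1) + (2*L - M - 1) + 2) ≠ 0 := by intro hcon; nlinarith
  have hn2 : (4*(M+1) + 7*(2*L - M - 1) + 6) ≠ 0 := by intro hcon; nlinarith
  have hn3 : (4*(M+1) - 3*(2*L - M - 1)) ≠ 0 := by intro hcon; nlinarith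
  have hn4 : ((M+1) + (2*L - M - 1)) ≠ 0 := by intro hcon; nlinarith
  have hn5 : ((M+1) + (2*L - M - 1) + 4) ≠ 0 := by intro hcon; nlinarith
  have hcEq : (((M + 1) - (2 * L - M - 1)) ^ 2 / ((M + 1) + (2 * L - M - 1) + 2) ^ 2) *
      (((4 * (M + 1) - 7 * (2 * L - M - 1) - 8) * (4 * (M + 1) + 3 * (2 * L - M - 1) + 6)) /
        ((4 * (M + 1) + 7 * (2 * L - M - 1) + 6) * (4 * (M + 1) - 3 * (2 * L - M - 1))))
      = Pc M L / Qc M L := by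
    rw [div_mul_div_comm]
    rw [div_eq_div_iff (by
      apply mul_ne_zero
      · exact pow_ne_zero 2 hn1
      · exact mul_ne_zero hn2 hn3) (ne_of_gt hQcpos)]
    unfold Pc Qc
    ring
  have hdEq : (((M + 1) - (2 * L - M - 1)) / ((M + 1) + (2 * L - M - 1) + 2)) *
      ((((M + 1) - (2 * L - M - 1) - 2) * ((M + 1) - (2 * L - M - 1) + 2)) /
        (((M + 1) + (2 * L - M - 1)) * ((M + 1) + (2 * L - M - 1) + 4)))
      = Pd M L / Qd L := by
    rw [div_mul_div_comm]
    rw [div_eq_div_iff (by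
      apply mul_ne_zero
      · exact hn1
      · exact mul_ne_zero hn4 hn5) (ne_of_gt hQdpos)]
    unfold Pd Qd
    ring
  constructor
  · rw [hcEq, div_le_div_iff₀ hQcpos hy]
    nlinarith [h.1]
  · rw [hdEq, div_le_div_iff₀ hy hQdpos]
    nlinarith [h.2]
end

section
/- With f(m) = M_m/m! where M_m is the maximal Eulerian number in row m, the identity f(2p) = ((2p+1)/(2p+2)) · f(2p+1) holds for all integers p ≥ 1. -/
/-- The maximal Eulerian number in row `m`. -/
def maxEulerian (m : ℕ) : ℕ := (Finset.Icc 1 m).sup (eulerian m)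

/-- `f(m) = M_m / m!`. -/
noncomputable def f (m : ℕ) : ℝ := (maxEulerian m : ℝ) / (Nat.factorial m : ℝ)


namespace FEO
open Finset

def E (m k : ℕ) : ℕ :=
  (Finset.univ.filter fun σ : Equiv.Perm (Fin m) => ascents m σ = k).card

lemma eulerian_eq_E (m l : ℕ) : eulerian m l = E m (l - 1) := by
  rw [eulerian, Fintype.card_subtype]
  rfl

open Finset

/-- word of a permutation, with out-of-range junk value `m` -/
def wd (m : ℕ) (σ : Equiv.Perm (Fin m)) : ℕ → ℕ :=
  fun i => if h : i < m then (σ ⟨i, h⟩ : ℕ) else m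

/-- number of ascents of a word, among the first `m` adjacent pairs -/
def nAsc (w : ℕ → ℕ) (m : ℕ) : ℕ :=
  ((Finset.range m).filter (fun i => w i < w (i + 1))).card

lemma wd_lt {m : ℕ} {σ : Equiv.Perm (Fin m)} {i : ℕ} (h : i < m) : wd m σ i < m := by
  simp only [wd, dif_pos h]; exact (σ ⟨i, h⟩).isLt

lemma wd_apply {m : ℕ} (σ : Equiv.Perm (Fin m)) {i : ℕ} (h : i < m) :
    wd m σ i = (σ ⟨i, h⟩ : ℕ) := by simp only [wd, dif_pos h]

lemma nAsc_congr {w w' : ℕ → ℕ} {m : ℕ} (h : ∀ i ≤ m, w i = w' i) : nAsc w m = nAsc w' m := by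
  unfold nAsc
  congr 1
  apply Finset.filter_congr
  intro i hi
  rw [Finset.mem_range] at hi
  rw [h i hi.le, h (i+1) hi]

lemma nAsc_le (w : ℕ → ℕ) (m : ℕ) : nAsc w m ≤ m := by
  classical
  calc nAsc w m ≤ (Finset.range m).card := Finset.card_filter_le _ _
  _ = m := Finset.card_range m

lemma ascents_eq (m : ℕ) (σ : Equiv.Perm (Fin m)) : ascents m σ = nAsc (wd m σ) (m - 1) := by
  classical
  unfold ascents nAsc
  apply Finset.card_bij (fun (i : Fin m) _ => (i : ℕ))
  · intro i hi
    simp only [Finset.mem_filter, Finset.mem_univ, true_and] at hi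
    obtain ⟨h, hlt⟩ := hi
    simp only [Finset.mem_filter, Finset.mem_range]
    refine ⟨by omega, ?_⟩
    rw [wd_apply σ i.isLt, wd_apply σ h]
    exact Fin.lt_def.mp hlt
  · intro a _ b _ hab
    exact Fin.val_injective hab
  · intro b hb
    simp only [Finset.mem_filter, Finset.mem_range] at hb
    obtain ⟨hb1, hb2⟩ := hb
    have hbm : b < m := by omega
    refine ⟨⟨b, hbm⟩, ?_, rfl⟩
    simp only [Finset.mem_filter, Finset.mem_univ, true_and]
    refine ⟨by omega, ?_⟩
    rw [wd_apply σ hbm, wd_apply σ (show b + 1 < m by omega)] at hb2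
    exact Fin.lt_def.mpr hb2


open Finset


/-- insert value `B` at position `j` -/
def wIns (j B : ℕ) (w : ℕ → ℕ) : ℕ → ℕ :=
  fun i => if i < j then w i else if i = j then B else w (i - 1)

lemma nAsc_eq_sum (w : ℕ → ℕ) (m : ℕ) :
    nAsc w m = ∑ i ∈ Finset.range m, (if w i < w (i + 1) then 1 else 0) := by
  classical
  exact Finset.card_filter _ _

lemma nAsc_wIns (w : ℕ → ℕ) (m B j : ℕ) (hB : ∀ i ≤ m, w i < B) (hj : j ≤ m + 1) :
    nAsc (wIns j B w) (m + 1) =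
      nAsc w m + (if j = m + 1 ∨ (0 < j ∧ w j ≤ w (j - 1)) then 1 else 0) := by
  classical
  set w' := wIns j B w with hw'
  have hlt : ∀ i, i < j → w' i = w i := by
    intro i h; simp only [hw', wIns, if_pos h]
  have heq : w' j = B := by
    simp [hw', wIns]
  have hgt : ∀ i, j < i → w' i = w (i - 1) := by
    intro i h
    simp only [hw', wIns]
    rw [if_neg (by omega), if_neg (by omega)]
  rw [nAsc_eq_sum, nAsc_eq_sum]
  rcases Nat.eq_or_lt_of_le hj with hj1 | hj2
  · -- j = m + 1 : insert at the end
    subst hj1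
    rw [if_pos (Or.inl rfl), Finset.sum_range_succ]
    have h1 : ∀ i ∈ Finset.range m, (if w' i < w' (i+1) then 1 else 0)
        = (if w i < w (i+1) then 1 else 0) := by
      intro i hi; rw [Finset.mem_range] at hi
      rw [hlt i (by omega), hlt (i+1) (by omega)]
    rw [Finset.sum_congr rfl h1]
    have : (if w' m < w' (m+1) then 1 else 0) = 1 := by
      rw [hlt m (by omega), heq, if_pos (hB m le_rfl)]
    omega
  · -- j ≤ m
    have hjm : j ≤ m := by omega
    rcases Nat.eq_zero_or_pos j with hj0 | hjpos
    · -- j = 0 : insert at the front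
      subst hj0
      rw [if_neg (by omega)]
      rw [Finset.sum_range_succ' (fun i => if w' i < w' (i+1) then 1 else 0) m]
      have h0 : (if w' 0 < w' (0+1) then 1 else 0) = 0 := by
        have e1 : w' 0 = B := heq
        have e2 : w' (0+1) = w 0 := by rw [hgt 1 (by omega)]
        rw [e1, e2, if_neg (by have := hB 0 (by omega); omega)]
      have h1 : ∀ i ∈ Finset.range m, (if w' (i+1) < w' (i+1+1) then 1 else 0)
          = (if w i < w (i+1) then 1 else 0) := by
        intro i hi
        rw [hgt (i+1) (by omega), hgt (i+1+1) (by omega),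
          show i+1-1 = i from by omega, show i+1+1-1 = i+1 from by omega]
      rw [Finset.sum_congr rfl h1, h0]
    · -- 0 < j ≤ m : insert in the middle
      obtain ⟨t, rfl⟩ : ∃ t, j = t + 1 := ⟨j - 1, by omega⟩
      have hδ : (if t + 1 = m + 1 ∨ (0 < t + 1 ∧ w (t+1) ≤ w (t + 1 - 1)) then 1 else 0)
          = 1 - (if w t < w (t+1) then 1 else 0) := by
        have ht : t + 1 - 1 = t := by omega
        rw [ht]
        rcases lt_or_ge (w t) (w (t+1)) with h | h
        · have hno : ¬(t + 1 = m + 1 ∨ (0 < t + 1 ∧ w (t+1) ≤ w t)) := by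
            push_neg
            exact ⟨by omega, fun _ => by omega⟩
          rw [if_pos h, if_neg hno]
        · rw [if_pos (Or.inr ⟨by omega, h⟩), if_neg (by omega)]
      rw [hδ]
      -- split LHS at t+1
      have hsplit : ∑ i ∈ Finset.range (m+1), (if w' i < w' (i+1) then 1 else 0)
          = (∑ i ∈ Finset.range (t+1), (if w' i < w' (i+1) then 1 else 0))
            + ∑ i ∈ Finset.Ico (t+1) (m+1), (if w' i < w' (i+1) then 1 else 0) := by
        rw [Finset.range_eq_Ico, ← Finset.sum_Ico_consecutive _ (by omega : 0 ≤ t+1) (by omega : t+1 ≤ m+1), ← Finset.range_eq_Ico]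
      have hsplitR : ∑ i ∈ Finset.range m, (if w i < w (i+1) then 1 else 0)
          = (∑ i ∈ Finset.range t, (if w i < w (i+1) then 1 else 0))
            + ((if w t < w (t+1) then 1 else 0)
            + ∑ i ∈ Finset.Ico (t+1) m, (if w i < w (i+1) then 1 else 0)) := by
        rw [Finset.range_eq_Ico, ← Finset.sum_Ico_consecutive _ (by omega : 0 ≤ t) (by omega : t ≤ m), ← Finset.range_eq_Ico]
        congr 1
        rw [← Finset.sum_Ico_consecutive _ (by omega : t ≤ t+1) (by omega : t+1 ≤ m)]
        congr 1
        rw [Finset.sum_Ico_eq_sum_range, show t+1-t = 1 from by omega, Finset.sum_range_one,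
          show t+0 = t from by omega]
      rw [hsplit, hsplitR]
      -- first chunk
      have hA : ∑ i ∈ Finset.range (t+1), (if w' i < w' (i+1) then 1 else 0)
          = (∑ i ∈ Finset.range t, (if w i < w (i+1) then 1 else 0)) + 1 := by
        rw [Finset.sum_range_succ]
        have h1 : ∀ i ∈ Finset.range t, (if w' i < w' (i+1) then 1 else 0)
            = (if w i < w (i+1) then 1 else 0) := by
          intro i hi; rw [Finset.mem_range] at hi
          rw [hlt i (by omega), hlt (i+1) (by omega)]
        rw [Finset.sum_congr rfl h1]
        have : (if w' t < w' (t+1) then 1 else 0) = 1 := by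
          rw [hlt t (by omega), heq, if_pos (hB t (by omega))]
        omega
      -- second chunk
      have hC : ∑ i ∈ Finset.Ico (t+1) (m+1), (if w' i < w' (i+1) then 1 else 0)
          = ∑ i ∈ Finset.Ico (t+1) m, (if w i < w (i+1) then 1 else 0) := by
        rw [Finset.sum_Ico_eq_sum_range, Finset.sum_Ico_eq_sum_range]
        have hm : m + 1 - (t+1) = (m - (t+1)) + 1 := by omega
        rw [hm, Finset.sum_range_succ' (fun k => if w' (t+1+k) < w' (t+1+k+1) then 1 else 0)]
        have h2 : ∀ k ∈ Finset.range (m - (t+1)),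
            (if w' (t+1+(k+1)) < w' (t+1+(k+1)+1) then 1 else 0)
              = (if w (t+1+k) < w (t+1+k+1) then 1 else 0) := by
          intro k hk
          rw [hgt (t+1+(k+1)) (by omega), hgt (t+1+(k+1)+1) (by omega),
            show t+1+(k+1)-1 = t+1+k from by omega,
            show t+1+(k+1)+1-1 = t+1+k+1 from by omega]
        rw [Finset.sum_congr rfl h2]
        have h3 : (if w' (t+1+0) < w' (t+1+0+1) then 1 else 0) = 0 := by
          have e1 : w' (t+1+0) = B := by rw [show t+1+0 = t+1 by rfl, heq]
          have e2 : w' (t+1+0+1) = w (t+1) := by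
            rw [hgt (t+1+0+1) (by omega)]; congr 1
          rw [e1, e2, if_neg (by have := hB (t+1) (by omega); omega)]
        rw [h3]
        omega
      rw [hA, hC]
      have hle : (if w t < w (t+1) then 1 else 0) ≤ 1 := by split <;> omega
      omega


/-- insertion of the maximal value `n` at position `j` into a permutation of `Fin n`. -/
def insPerm (n : ℕ) (j : Fin (n + 1)) (τ : Equiv.Perm (Fin n)) : Equiv.Perm (Fin (n + 1)) :=
  (finSuccEquiv' j).trans ((Equiv.optionCongr τ).trans (finSuccEquiv' (Fin.last n)).symm)

lemma insPerm_self (n : ℕ) (j : Fin (n + 1)) (τ : Equiv.Perm (Fin n)) :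
    insPerm n j τ j = Fin.last n := by
  simp [insPerm, finSuccEquiv'_at, finSuccEquiv'_symm_none]

lemma insPerm_succAbove (n : ℕ) (j : Fin (n + 1)) (τ : Equiv.Perm (Fin n)) (k : Fin n) :
    insPerm n j τ (j.succAbove k) = (τ k).castSucc := by
  simp only [insPerm, Equiv.trans_apply, finSuccEquiv'_succAbove, Equiv.optionCongr_apply,
    Option.map_some, finSuccEquiv'_symm_some]
  rw [Fin.succAbove_last]

lemma insPerm_injective (n : ℕ) :
    Function.Injective (fun p : Fin (n + 1) × Equiv.Perm (Fin n) => insPerm n p.1 p.2) := by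
  intro ⟨j₁, τ₁⟩ ⟨j₂, τ₂⟩ h
  simp only at h
  have hj : j₁ = j₂ := by
    have h1 := insPerm_self n j₁ τ₁
    have h2 := insPerm_self n j₂ τ₂
    rw [h] at h1
    exact (insPerm n j₂ τ₂).injective (h1.trans h2.symm)
  subst hj
  have hτ : τ₁ = τ₂ := by
    ext k
    have h1 := insPerm_succAbove n j₁ τ₁ k
    have h2 := insPerm_succAbove n j₁ τ₂ k
    rw [h] at h1
    exact congrArg Fin.val (Fin.castSucc_injective n (h1.symm.trans h2))
  rw [hτ]

lemma wd_insPerm (n : ℕ) (j : Fin (n + 1)) (τ : Equiv.Perm (Fin n)) :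
    ∀ i ≤ n, wd (n + 1) (insPerm n j τ) i = wIns (j : ℕ) n (wd n τ) i := by
  intro i hi
  have hi1 : i < n + 1 := by omega
  rcases lt_trichotomy i (j : ℕ) with hlt | heq | hgt
  · -- i < j
    have hin : i < n := by have := j.isLt; omega
    have hsa : j.succAbove ⟨i, hin⟩ = ⟨i, hi1⟩ := by
      rw [Fin.succAbove_of_castSucc_lt]
      · rfl
      · exact hlt
    rw [wd_apply _ hi1, wIns, if_pos hlt, wd_apply τ hin, ← hsa, insPerm_succAbove]
    rfl
  · -- i = j
    have : (⟨i, hi1⟩ : Fin (n+1)) = j := Fin.ext heq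
    rw [wd_apply _ hi1, this, insPerm_self, wIns, if_neg (by omega), if_pos heq]
    rfl
  · -- i > j
    have hi0 : 0 < i := by omega
    have hin : i - 1 < n := by omega
    have hsa : j.succAbove ⟨i - 1, hin⟩ = ⟨i, hi1⟩ := by
      rw [Fin.succAbove_of_le_castSucc]
      · exact Fin.ext (by simp [Fin.succ]; omega)
      · exact Fin.le_def.mpr (by simp; omega)
    rw [wd_apply _ hi1, wIns, if_neg (by omega), if_neg (by omega), wd_apply τ hin, ← hsa,
      insPerm_succAbove]
    rfl


lemma ascents_insPerm (n : ℕ) (hn : 1 ≤ n) (j : Fin (n + 1)) (τ : Equiv.Perm (Fin n)) :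
    ascents (n + 1) (insPerm n j τ) = ascents n τ +
      (if (j : ℕ) = n ∨ (0 < (j : ℕ) ∧ wd n τ (j : ℕ) ≤ wd n τ ((j : ℕ) - 1)) then 1 else 0) := by
  obtain ⟨t, rfl⟩ : ∃ t, n = t + 1 := ⟨n - 1, by omega⟩
  rw [ascents_eq, show (t + 1 + 1 - 1) = t + 1 from by omega,
    nAsc_congr (fun i hi => wd_insPerm (t+1) j τ i hi),
    nAsc_wIns (wd (t+1) τ) t (t+1) (j : ℕ)
      (fun i hi => wd_lt (by omega)) (by have := j.isLt; omega),
    ascents_eq _ τ, show (t + 1 - 1) = t from by omega]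

lemma count_noinc (n : ℕ) (hn : 1 ≤ n) (τ : Equiv.Perm (Fin n)) :
    (Finset.univ.filter fun j : Fin (n + 1) =>
        ¬((j : ℕ) = n ∨ (0 < (j : ℕ) ∧ wd n τ (j : ℕ) ≤ wd n τ ((j : ℕ) - 1)))).card
      = ascents n τ + 1 := by
  classical
  rw [Finset.card_filter]
  rw [Fin.sum_univ_eq_sum_range
    (fun j => if ¬(j = n ∨ (0 < j ∧ wd n τ j ≤ wd n τ (j - 1))) then 1 else 0) (n+1)]
  obtain ⟨t, rfl⟩ : ∃ t, n = t + 1 := ⟨n - 1, by omega⟩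
  rw [Finset.sum_range_succ'
    (fun j => if ¬(j = t+1 ∨ (0 < j ∧ wd (t+1) τ j ≤ wd (t+1) τ (j - 1))) then 1 else 0) (t+1)]
  have h0 : (if ¬((0:ℕ) = t+1 ∨ (0 < (0:ℕ) ∧ wd (t+1) τ 0 ≤ wd (t+1) τ (0 - 1))) then (1:ℕ) else 0) = 1 := by
    rw [if_pos]; push_neg; exact ⟨by omega, by omega⟩
  rw [h0, Finset.sum_range_succ]
  have hlast : (if ¬(t+1 = t+1 ∨ (0 < t+1 ∧ wd (t+1) τ (t+1) ≤ wd (t+1) τ (t+1 - 1))) then (1:ℕ) else 0) = 0 := by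
    rw [if_neg]; push_neg; exact Or.inl rfl
  rw [hlast]
  have hmid : ∀ i ∈ Finset.range t,
      (if ¬(i+1 = t+1 ∨ (0 < i+1 ∧ wd (t+1) τ (i+1) ≤ wd (t+1) τ (i+1 - 1))) then (1:ℕ) else 0)
        = (if wd (t+1) τ i < wd (t+1) τ (i+1) then 1 else 0) := by
    intro i hi
    rw [Finset.mem_range] at hi
    rw [show i + 1 - 1 = i from by omega]
    by_cases h : wd (t+1) τ i < wd (t+1) τ (i+1)
    · rw [if_pos h, if_pos]
      push_neg
      exact ⟨by omega, fun _ => by omega⟩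
    · rw [if_neg h, if_neg]
      push_neg
      exact Or.inr ⟨by omega, by omega⟩
  rw [Finset.sum_congr rfl hmid]
  rw [ascents_eq _ τ, show t + 1 - 1 = t from by omega, nAsc_eq_sum]

lemma ascents_le (n : ℕ) (σ : Equiv.Perm (Fin n)) : ascents n σ ≤ n - 1 := by
  rw [ascents_eq]; exact nAsc_le _ _

lemma E_succ_sum (n K : ℕ) :
    E (n + 1) K = ∑ τ : Equiv.Perm (Fin n), ∑ j : Fin (n + 1),
      (if ascents (n + 1) (insPerm n j τ) = K then (1:ℕ) else 0) := by
  classical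
  have hbij : Function.Bijective
      (fun p : Fin (n + 1) × Equiv.Perm (Fin n) => insPerm n p.1 p.2) := by
    rw [Fintype.bijective_iff_injective_and_card]
    refine ⟨insPerm_injective n, ?_⟩
    simp [Fintype.card_perm, Nat.factorial_succ]
  have h1 : E (n+1) K = (Finset.univ.filter
      fun p : Fin (n + 1) × Equiv.Perm (Fin n) =>
        ascents (n+1) (insPerm n p.1 p.2) = K).card := by
    rw [E]
    refine (Finset.card_bij (fun p _ => insPerm n p.1 p.2) ?_ ?_ ?_).symm
    · intro p hp
      simp only [Finset.mem_filter, Finset.mem_univ, true_and] at hp ⊢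
      exact hp
    · intro p1 hh1 p2 hh2 h
      exact hbij.1 h
    · intro σ hσ
      simp only [Finset.mem_filter, Finset.mem_univ, true_and] at hσ
      obtain ⟨p, hp⟩ := hbij.2 σ
      have hp' : insPerm n p.1 p.2 = σ := hp
      exact ⟨p, by simp only [Finset.mem_filter, Finset.mem_univ, true_and]; rw [hp']; exact hσ, hp⟩
  rw [h1, Finset.card_filter, ← Finset.univ_product_univ, Finset.sum_product_right]

lemma inner_count (n : ℕ) (hn : 1 ≤ n) (τ : Equiv.Perm (Fin n)) (K : ℕ) :
    (∑ j : Fin (n + 1), if ascents (n + 1) (insPerm n j τ) = K then (1:ℕ) else 0)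
      = (if ascents n τ = K then ascents n τ + 1 else 0)
        + (if ascents n τ + 1 = K then n - ascents n τ else 0) := by
  classical
  set a := ascents n τ with ha
  set C := fun j : Fin (n+1) =>
    ((j : ℕ) = n ∨ (0 < (j : ℕ) ∧ wd n τ (j:ℕ) ≤ wd n τ ((j:ℕ) - 1))) with hC
  have hs : ∀ j : Fin (n+1), (if ascents (n + 1) (insPerm n j τ) = K then (1:ℕ) else 0)
      = if a + (if C j then 1 else 0) = K then 1 else 0 := by
    intro j; rw [ascents_insPerm n hn j τ]
  rw [Finset.sum_congr rfl (fun j _ => hs j)]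
  have hcard : (Finset.univ.filter fun j : Fin (n+1) => ¬ C j).card = a + 1 :=
    count_noinc n hn τ
  have htot : (Finset.univ.filter fun j : Fin (n+1) => C j).card
      + (Finset.univ.filter fun j : Fin (n+1) => ¬ C j).card = n + 1 := by
    rw [Finset.card_filter_add_card_filter_not, Finset.card_univ, Fintype.card_fin]
  by_cases h1 : a = K
  · have hpt : ∀ j : Fin (n+1), (if a + (if C j then 1 else 0) = K then (1:ℕ) else 0)
        = if ¬ C j then 1 else 0 := by
      intro j; by_cases hc : C j
      · rw [if_pos hc, if_neg (by omega), if_neg (not_not_intro hc)]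
      · rw [if_neg hc, if_pos (by omega), if_pos hc]
    rw [Finset.sum_congr rfl (fun j _ => hpt j), ← Finset.card_filter, hcard,
      if_pos h1, if_neg (by omega)]
  · by_cases h2 : a + 1 = K
    · have hpt : ∀ j : Fin (n+1), (if a + (if C j then 1 else 0) = K then (1:ℕ) else 0)
          = if C j then 1 else 0 := by
        intro j; by_cases hc : C j
        · rw [if_pos hc, if_pos (by omega)]
        · rw [if_neg hc, if_neg (by omega)]
      rw [Finset.sum_congr rfl (fun j _ => hpt j), ← Finset.card_filter,
        if_neg h1, if_pos h2]
      omega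
    · have hpt : ∀ j : Fin (n+1), (if a + (if C j then 1 else 0) = K then (1:ℕ) else 0) = 0 := by
        intro j; rw [if_neg]; by_cases hc : C j
        · rw [if_pos hc]; omega
        · rw [if_neg hc]; omega
      rw [Finset.sum_congr rfl (fun j _ => hpt j), if_neg h1, if_neg h2]
      simp

lemma sum_ite_asc (n v c : ℕ) :
    (∑ τ : Equiv.Perm (Fin n), if ascents n τ = v then c else 0) = c * E n v := by
  classical
  rw [← Finset.sum_filter, Finset.sum_const, E, smul_eq_mul, mul_comm]

lemma E_rec (n k : ℕ) (hn : 1 ≤ n) :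
    E (n + 1) (k + 1) = (k + 2) * E n (k + 1) + (n - k) * E n k := by
  classical
  rw [E_succ_sum]
  have hpt : ∀ τ : Equiv.Perm (Fin n),
      (∑ j : Fin (n+1), if ascents (n+1) (insPerm n j τ) = k+1 then (1:ℕ) else 0)
      = (if ascents n τ = k+1 then k+2 else 0) + (if ascents n τ = k then n-k else 0) := by
    intro τ
    rw [inner_count n hn τ (k+1)]
    have := ascents_le n τ
    split_ifs <;> omega
  rw [Finset.sum_congr rfl (fun τ _ => hpt τ), Finset.sum_add_distrib,
    sum_ite_asc, sum_ite_asc]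

lemma E_rec0 (n : ℕ) (hn : 1 ≤ n) : E (n + 1) 0 = E n 0 := by
  classical
  rw [E_succ_sum]
  have hpt : ∀ τ : Equiv.Perm (Fin n),
      (∑ j : Fin (n+1), if ascents (n+1) (insPerm n j τ) = 0 then (1:ℕ) else 0)
      = (if ascents n τ = 0 then (1:ℕ) else 0) := by
    intro τ
    rw [inner_count n hn τ 0]
    rcases Nat.eq_zero_or_pos (ascents n τ) with h1 | h1
    · rw [h1]; norm_num
    · rw [if_neg (by omega), if_neg (by omega), if_neg (by omega)]
  rw [Finset.sum_congr rfl (fun τ _ => hpt τ), ← Finset.card_filter]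
  rfl

lemma rev_invol (n : ℕ) (ρ : Equiv.Perm (Fin n)) :
    (ρ.trans (Fin.revPerm)).trans (Fin.revPerm) = ρ := by
  ext i
  simp [Equiv.trans_apply, Fin.revPerm_apply, Fin.rev_rev]

lemma ascents_rev (n : ℕ) (σ : Equiv.Perm (Fin n)) :
    ascents n (σ.trans Fin.revPerm) = (n - 1) - ascents n σ := by
  classical
  rw [ascents_eq, ascents_eq]
  have hw : ∀ i, i < n → wd n (σ.trans Fin.revPerm) i = n - 1 - wd n σ i := by
    intro i hi
    rw [wd_apply _ hi, wd_apply _ hi]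
    simp only [Equiv.trans_apply, Fin.revPerm_apply, Fin.val_rev]
    omega
  have hne : ∀ i, i + 1 < n → wd n σ i ≠ wd n σ (i+1) := by
    intro i hi h
    rw [wd_apply _ (by omega : i < n), wd_apply _ hi] at h
    have h2 := σ.injective (Fin.val_injective h)
    have h3 := congrArg Fin.val h2
    simp at h3
  have hcongr : ((Finset.range (n-1)).filter fun i =>
      wd n (σ.trans Fin.revPerm) i < wd n (σ.trans Fin.revPerm) (i+1)) =
      ((Finset.range (n-1)).filter fun i => ¬(wd n σ i < wd n σ (i+1))) := by
    apply Finset.filter_congr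
    intro i hi
    rw [Finset.mem_range] at hi
    rw [hw i (by omega), hw (i+1) (by omega)]
    have h1 : wd n σ i < n := wd_lt (by omega)
    have h2 : wd n σ (i+1) < n := wd_lt (by omega)
    have h3 := hne i (by omega)
    constructor
    · intro h; omega
    · intro h; omega
  rw [nAsc, nAsc, hcongr]
  have hc := Finset.card_filter_add_card_filter_not
    (s := Finset.range (n-1)) (p := fun i => wd n σ i < wd n σ (i+1))
  rw [Finset.card_range] at hc
  omega

lemma E_symm (n k : ℕ) (hk : k ≤ n - 1) : E n k = E n (n - 1 - k) := by
  classical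
  rw [E, E]
  apply Finset.card_bij (fun (σ : Equiv.Perm (Fin n)) _ => σ.trans Fin.revPerm)
  · intro σ hσ
    simp only [Finset.mem_filter, Finset.mem_univ, true_and] at hσ ⊢
    rw [ascents_rev, hσ]
  · intro a ha b hb h
    have h2 := congrArg (fun e => e.trans (Fin.revPerm)) h
    simpa only [rev_invol] using h2
  · intro ρ hρ
    simp only [Finset.mem_filter, Finset.mem_univ, true_and] at hρ
    refine ⟨ρ.trans Fin.revPerm, ?_, rev_invol n ρ⟩
    simp only [Finset.mem_filter, Finset.mem_univ, true_and]
    rw [ascents_rev, hρ]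
    omega

lemma E_zero_of_large (n k : ℕ) (hk : n - 1 < k) : E n k = 0 := by
  classical
  rw [E, Finset.card_eq_zero, Finset.filter_eq_empty_iff]
  intro σ _
  have := ascents_le n σ
  omega

lemma E_step : ∀ n k : ℕ, 2 * (k + 1) ≤ n → E n k ≤ E n (k + 1) := by
  intro n
  induction n with
  | zero => intro k hk; omega
  | succ n ih =>
    intro k hk
    rcases Nat.eq_zero_or_pos n with hn0 | hn
    · omega
    rcases Nat.eq_zero_or_pos k with rfl | hkpos
    · rw [E_rec0 n hn, E_rec n 0 hn]
      have h1 : E n 0 ≤ (n - 0) * E n 0 := Nat.le_mul_of_pos_left _ (by omega)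
      omega
    obtain ⟨k', rfl⟩ : ∃ k', k = k' + 1 := ⟨k - 1, by omega⟩
    obtain ⟨d, hd⟩ : ∃ d, n = 2 * k' + 3 + d := ⟨n - (2*k'+3), by omega⟩
    have h01 : E n k' ≤ E n (k' + 1) := ih k' (by omega)
    rw [E_rec n k' hn, E_rec n (k'+1) hn]
    rcases Nat.eq_zero_or_pos d with rfl | hd1
    · -- n = 2k'+3 : use symmetry
      have hsym : E n (k' + 1 + 1) = E n k' := by
        rw [E_symm n (k'+1+1) (by omega), show n - 1 - (k'+1+1) = k' from by omega]
      rw [hsym, show n - (k'+1) = k' + 2 from by omega, show n - k' = k' + 3 from by omega]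
      linarith
    · have h12 : E n (k' + 1) ≤ E n (k' + 1 + 1) := ih (k' + 1) (by omega)
      rw [show n - (k'+1) = k' + 2 + d from by omega, show n - k' = k' + 3 + d from by omega]
      calc (k' + 2) * E n (k' + 1) + (k' + 3 + d) * E n k'
          ≤ (k' + 2) * E n (k' + 1) + (k' + 3 + d) * E n (k' + 1) :=
            Nat.add_le_add_left (Nat.mul_le_mul_left _ h01) _
        _ = (k' + 3) * E n (k' + 1) + (k' + 2 + d) * E n (k' + 1) := by ring
        _ ≤ (k' + 1 + 2) * E n (k' + 1 + 1) + (k' + 2 + d) * E n (k' + 1) :=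
            Nat.add_le_add_right (Nat.mul_le_mul_left _ h12) _

lemma E_mono (n : ℕ) : ∀ b, b ≤ (n - 1) / 2 → ∀ a, a ≤ b → E n a ≤ E n b := by
  intro b
  induction b with
  | zero => intro _ a ha; rw [Nat.le_zero.mp ha]
  | succ b ihb =>
    intro hb a ha
    rcases Nat.eq_or_lt_of_le ha with rfl | hlt
    · exact le_rfl
    have h1 : E n a ≤ E n b := ihb (by omega) a (by omega)
    have h2 : E n b ≤ E n (b + 1) := E_step n b (by omega)
    exact h1.trans h2

lemma E_le_center (n : ℕ) (hn : 1 ≤ n) (k : ℕ) : E n k ≤ E n ((n - 1) / 2) := by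
  rcases le_or_gt k ((n-1)/2) with h | h
  · exact E_mono n _ le_rfl k h
  rcases le_or_gt k (n - 1) with h2 | h2
  · rw [E_symm n k h2]
    exact E_mono n _ le_rfl _ (by omega)
  · rw [E_zero_of_large n k h2]
    exact Nat.zero_le _

lemma maxEulerian_eq (m : ℕ) (hm : 1 ≤ m) : maxEulerian m = E m ((m - 1) / 2) := by
  apply le_antisymm
  · apply Finset.sup_le
    intro l hl
    rw [eulerian_eq_E]
    exact E_le_center m hm _
  · have hmem : ((m - 1) / 2 + 1) ∈ Finset.Icc 1 m := by
      rw [Finset.mem_Icc]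
      omega
    have h := Finset.le_sup (f := eulerian m) hmem
    rw [eulerian_eq_E, Nat.add_sub_cancel] at h
    exact h

lemma maxEulerian_odd (p : ℕ) (hp : 1 ≤ p) :
    maxEulerian (2 * p + 1) = (2 * p + 2) * maxEulerian (2 * p) := by
  rw [maxEulerian_eq (2*p+1) (by omega), maxEulerian_eq (2*p) (by omega),
    show (2*p+1-1)/2 = p from by omega, show (2*p-1)/2 = p - 1 from by omega]
  obtain ⟨q, rfl⟩ : ∃ q, p = q + 1 := ⟨p - 1, by omega⟩
  have hrec := E_rec (2*(q+1)) q (by omega)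
  have hsym : E (2*(q+1)) (q+1) = E (2*(q+1)) q := by
    rw [E_symm (2*(q+1)) (q+1) (by omega), show 2*(q+1) - 1 - (q+1) = q from by omega]
  rw [show q + 1 - 1 = q from rfl, hrec, hsym, show 2*(q+1) - q = q + 2 from by omega]
  ring

end FEO

theorem f_even_odd (p : ℕ) (hp : 1 ≤ p) :
    f (2 * p) = ((2 * (p : ℝ) + 1) / (2 * (p : ℝ) + 2)) * f (2 * p + 1) := by
  have hM := FEO.maxEulerian_odd p hp
  rw [f, f, hM, Nat.factorial_succ]
  have h1 : ((2 * p).factorial : ℝ) ≠ 0 := by positivity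
  have h2 : (2 * (p:ℝ) + 1) ≠ 0 := by positivity
  have h3 : (2 * (p:ℝ) + 2) ≠ 0 := by positivity
  push_cast
  field_simp
end
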